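/- arXiv:2301.03177 — 5 statements merged into one kernel-verified Lean document; each statement's English description precedes it below -/
import Mathlib

section
/- Let k be an infinite field whose characteristic is zero or strictly greater than d. For every monomial M = X_0^{a_0} X_1^{a_1} ⋯ X_n^{a_n} in k[X_0, …, X_n] with each a_i > 0 and d = ∑_{i=0}^n a_i, there exist an integer r with r ≤ (1/2) · ( ∏_{i=0}^n (a_i + 1) − ∏_{i=0}^n (a_i − 1) ), scalars λ_1, …, λ_r ∈ k, and linear forms L_1, …, L_r ∈ k[X_0, …, X_n] of degree 1 such that M = ∑_{i=1}^r λ_i · L_i^d. In particular the Waring rank of M over k is at most (1/2)(∏_{i=0}^n(a_i+1) − ∏_{i=0}^n(a_i−1)). -/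
open MvPolynomial


open Polynomial in
lemma exists_good_q (k : Type*) [Field k] [Infinite k] (N : ℕ) :
    ∃ q : k, q ≠ 0 ∧ ∀ e : ℕ, 0 < e → e ≤ N → q ^ e ≠ 1 := by
  classical
  obtain ⟨q, hq⟩ := Infinite.exists_notMem_finset
    (insert (0:k) ((Finset.Icc 1 N).biUnion fun e => (nthRoots e (1:k)).toFinset))
  refine ⟨q, fun h => hq (by simp [h]), fun e he heN h1 => hq ?_⟩
  refine Finset.mem_insert_of_mem (Finset.mem_biUnion.mpr ⟨e, Finset.mem_Icc.mpr ⟨he, heN⟩, ?_⟩)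
  simpa [Multiset.mem_toFinset, mem_nthRoots he] using h1

open Matrix in
lemma vandermonde_dual {k : Type*} [Field k] {N : ℕ} (v : Fin (N + 1) → k)
    (hv : Function.Injective v) :
    ∃ w : Fin (N + 1) → k, ∀ p : Fin (N + 1),
      ∑ m, w m * v m ^ (p : ℕ) = if (p : ℕ) = N then 1 else 0 := by
  classical
  set A := (Matrix.vandermonde v).transpose with hA
  have hdet : A.det ≠ 0 := by
    rw [hA, Matrix.det_transpose]
    exact Matrix.det_vandermonde_ne_zero_iff.mpr hv
  haveI : Invertible A := A.invertibleOfIsUnitDet (isUnit_iff_ne_zero.mpr hdet)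
  set t : Fin (N + 1) → k := fun p => if (p : ℕ) = N then 1 else 0 with ht
  refine ⟨A⁻¹.mulVec t, fun p => ?_⟩
  have : A.mulVec (A⁻¹.mulVec t) = t := by
    rw [Matrix.mulVec_mulVec, Matrix.mul_nonsing_inv _ (isUnit_iff_ne_zero.mpr hdet),
      Matrix.one_mulVec]
  have hp := congrFun this p
  simpa [Matrix.mulVec, dotProduct, hA, Matrix.transpose_apply, Matrix.vandermonde,
    mul_comm] using hp

lemma finset_dual {k : Type*} [Field k] (S : Finset ℤ) (nd : ℤ → k) (N : ℕ)
    (hcard : S.card = N + 1) (hinj : Set.InjOn nd S) :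
    ∃ w : ℤ → k, ∀ p : ℕ, p ≤ N → ∑ j ∈ S, w j * nd j ^ p = if p = N then 1 else 0 := by
  classical
  have e : {x // x ∈ S} ≃ Fin (N + 1) := S.equivFin.trans (finCongr hcard)
  set v : Fin (N + 1) → k := fun m => nd ((e.symm m) : ℤ) with hv
  have hvinj : Function.Injective v := by
    intro m m' h
    have := hinj (e.symm m).2 (e.symm m').2 h
    exact e.symm.injective (Subtype.ext this)
  obtain ⟨w', hw'⟩ := vandermonde_dual v hvinj
  refine ⟨fun j => if h : j ∈ S then w' (e ⟨j, h⟩) else 0, fun p hp => ?_⟩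
  have hpN : p < N + 1 := Nat.lt_succ_of_le hp
  have := hw' ⟨p, hpN⟩
  rw [← this]
  rw [← Finset.sum_attach S (fun j => (if h : j ∈ S then w' (e ⟨j, h⟩) else 0) * nd j ^ p)]
  refine Fintype.sum_equiv e _ _ (fun x => ?_)
  simp [hv, e.symm_apply_apply]

section ND
variable {k : Type*} [Field k]

noncomputable def nd (q : k) (j : ℤ) : k := (j.sign : k) * q ^ j.natAbs

def shiftI (j : ℤ) : ℤ := j + j.sign

@[simp] lemma nd_zero (q : k) : nd q 0 = 0 := by simp [nd]

lemma nd_neg (q : k) (j : ℤ) : nd q (-j) = - nd q j := by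
  simp [nd, Int.sign_neg]

lemma nd_ne_zero {q : k} (hq : q ≠ 0) {j : ℤ} (hj : j ≠ 0) : nd q j ≠ 0 := by
  rcases Int.lt_trichotomy j 0 with h | h | h
  · simp [nd, Int.sign_eq_neg_one_iff_neg.mpr h, hq]
  · exact absurd h hj
  · simp [nd, Int.sign_eq_one_iff_pos.mpr h, hq]

@[simp] lemma shiftI_zero : shiftI 0 = 0 := rfl

lemma shiftI_eq_zero {j : ℤ} : shiftI j = 0 ↔ j = 0 := by
  rcases Int.lt_trichotomy j 0 with h | h | h
  · simp [shiftI, Int.sign_eq_neg_one_iff_neg.mpr h]; omega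
  · simp [h]
  · simp [shiftI, Int.sign_eq_one_iff_pos.mpr h]; omega

lemma shiftI_sign (j : ℤ) : (shiftI j).sign = j.sign := by
  rcases Int.lt_trichotomy j 0 with h | h | h
  · have : shiftI j < 0 := by simp [shiftI, Int.sign_eq_neg_one_iff_neg.mpr h]; omega
    rw [Int.sign_eq_neg_one_iff_neg.mpr this, Int.sign_eq_neg_one_iff_neg.mpr h]
  · simp [h]
  · have : 0 < shiftI j := by simp [shiftI, Int.sign_eq_one_iff_pos.mpr h]; omega
    rw [Int.sign_eq_one_iff_pos.mpr this, Int.sign_eq_one_iff_pos.mpr h]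

lemma shiftI_natAbs {j : ℤ} (hj : j ≠ 0) : (shiftI j).natAbs = j.natAbs + 1 := by
  rcases Int.lt_trichotomy j 0 with h | h | h
  · simp [shiftI, Int.sign_eq_neg_one_iff_neg.mpr h]; omega
  · exact absurd h hj
  · simp [shiftI, Int.sign_eq_one_iff_pos.mpr h]; omega

lemma nd_shiftI (q : k) (j : ℤ) : nd q (shiftI j) = q * nd q j := by
  by_cases hj : j = 0
  · simp [hj]
  · rw [nd, nd, shiftI_sign, shiftI_natAbs hj, pow_succ]; ring

lemma pow_inj_of_good {q : k} (hq : q ≠ 0) {B : ℕ} (hgood : ∀ e : ℕ, 0 < e → e ≤ 2 * B → q ^ e ≠ 1)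
    {m m' : ℕ} (hm : m ≤ 2 * B) (hm' : m' ≤ 2 * B) (h : q ^ m = q ^ m') : m = m' := by
  rcases le_total m m' with hle | hle
  · by_contra hne
    have h1 : q ^ m * q ^ (m' - m) = q ^ m * 1 := by
      rw [mul_one, ← pow_add]; rw [h]; congr 1; omega
    have := mul_left_cancel₀ (pow_ne_zero m hq) h1
    exact hgood (m' - m) (by omega) (by omega) this
  · by_contra hne
    have h1 : q ^ m' * q ^ (m - m') = q ^ m' * 1 := by
      rw [mul_one, ← pow_add]; rw [← h]; congr 1; omega
    have := mul_left_cancel₀ (pow_ne_zero m' hq) h1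
    exact hgood (m - m') (by omega) (by omega) this

lemma nd_injOn {q : k} (hq : q ≠ 0) (h2 : (2 : k) ≠ 0) {B : ℕ}
    (hgood : ∀ e : ℕ, 0 < e → e ≤ 2 * B → q ^ e ≠ 1) :
    Set.InjOn (nd q) {j : ℤ | j.natAbs ≤ B} := by
  intro j hj j' hj' h
  simp only [Set.mem_setOf_eq] at hj hj'
  by_cases h0 : j = 0
  · subst h0
    rw [nd_zero] at h
    by_contra hne
    exact nd_ne_zero hq (Ne.symm hne) h.symm
  by_cases h0' : j' = 0
  · subst h0'
    rw [nd_zero] at h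
    exact absurd h (nd_ne_zero hq h0)
  -- both nonzero
  have hsq : ((j.sign : k)) ^ 2 = 1 := by
    rcases Int.lt_trichotomy j 0 with hlt | hlt | hlt
    · rw [Int.sign_eq_neg_one_iff_neg.mpr hlt]; push_cast; ring
    · exact absurd hlt h0
    · rw [Int.sign_eq_one_iff_pos.mpr hlt]; push_cast; ring
  have hsq' : ((j'.sign : k)) ^ 2 = 1 := by
    rcases Int.lt_trichotomy j' 0 with hlt | hlt | hlt
    · rw [Int.sign_eq_neg_one_iff_neg.mpr hlt]; push_cast; ring
    · exact absurd hlt h0'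
    · rw [Int.sign_eq_one_iff_pos.mpr hlt]; push_cast; ring
  have hsquare : q ^ (2 * j.natAbs) = q ^ (2 * j'.natAbs) := by
    have := congrArg (fun x => x ^ 2) h
    simp only [nd, mul_pow, hsq, hsq', one_mul, ← pow_mul] at this
    rw [mul_comm j.natAbs 2, mul_comm j'.natAbs 2] at this
    exact this
  have hnat : j.natAbs = j'.natAbs := by
    have := pow_inj_of_good hq hgood (by omega) (by omega) hsquare
    omega
  have hsgn : (j.sign : k) = (j'.sign : k) := by
    have hqn : q ^ j.natAbs ≠ 0 := pow_ne_zero _ hq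
    rw [nd, nd, ← hnat] at h
    exact mul_right_cancel₀ hqn h
  have hst : ∀ m : ℤ, m ≠ 0 → m.sign = 1 ∨ m.sign = -1 := by
    intro m hm
    rcases Int.lt_trichotomy m 0 with hlt | hlt | hlt
    · exact Or.inr (Int.sign_eq_neg_one_iff_neg.mpr hlt)
    · exact absurd hlt hm
    · exact Or.inl (Int.sign_eq_one_iff_pos.mpr hlt)
  have : j.sign = j'.sign := by
    rcases hst j h0 with h1 | h1 <;> rcases hst j' h0' with h2' | h2'
    · rw [h1, h2']
    · exfalso; rw [h1, h2'] at hsgn; push_cast at hsgn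
      apply h2; linear_combination hsgn
    · exfalso; rw [h1, h2'] at hsgn; push_cast at hsgn
      apply h2; linear_combination -hsgn
    · rw [h1, h2']
  calc j = j.sign * j.natAbs := (Int.sign_mul_natAbs j).symm
    _ = j'.sign * j'.natAbs := by rw [this, hnat]
    _ = j' := Int.sign_mul_natAbs j'

end ND

section ND2
variable {k : Type*} [Field k]

lemma shiftI_iter_eq_zero {m : ℕ} {j : ℤ} : shiftI^[m] j = 0 ↔ j = 0 := by
  induction m with
  | zero => simp
  | succ m ih =>
    rw [Function.iterate_succ_apply']
    rw [shiftI_eq_zero, ih]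

lemma shiftI_iter_natAbs (m : ℕ) {j : ℤ} (hj : j ≠ 0) :
    (shiftI^[m] j).natAbs = j.natAbs + m := by
  induction m with
  | zero => simp
  | succ m ih =>
    rw [Function.iterate_succ_apply', shiftI_natAbs (shiftI_iter_eq_zero.not.mpr hj), ih]
    omega

lemma nd_shiftI_iter (q : k) (m : ℕ) (j : ℤ) : nd q (shiftI^[m] j) = q ^ m * nd q j := by
  induction m with
  | zero => simp
  | succ m ih => rw [Function.iterate_succ_apply', nd_shiftI, ih, pow_succ]; ring

lemma iterate_pi_apply {ι : Type*} (f : ℤ → ℤ) (m : ℕ) (s : ι → ℤ) (i : ι) :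
    ((fun (t : ι → ℤ) (i' : ι) => f (t i'))^[m] s) i = f^[m] (s i) := by
  induction m generalizing s with
  | zero => simp
  | succ m ih => rw [Function.iterate_succ_apply, Function.iterate_succ_apply]; exact ih _

end ND2

noncomputable def Jset (a : ℕ) : Finset ℤ :=
  (Finset.Icc (-(((a + 1) / 2 : ℕ) : ℤ)) (((a + 1) / 2 : ℕ) : ℤ)).filter
    (fun j => j ≠ 0 ∨ Even a)

lemma mem_Jset {a : ℕ} {j : ℤ} :
    j ∈ Jset a ↔ j.natAbs ≤ (a + 1) / 2 ∧ (j ≠ 0 ∨ Even a) := by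
  simp only [Jset, Finset.mem_filter, Finset.mem_Icc]
  constructor
  · rintro ⟨⟨h1, h2⟩, h3⟩; exact ⟨by omega, h3⟩
  · rintro ⟨h1, h2⟩; exact ⟨⟨by omega, by omega⟩, h2⟩

lemma card_Jset (a : ℕ) : (Jset a).card = a + 1 := by
  classical
  by_cases he : Even a
  · rw [Jset, Finset.filter_true_of_mem (fun j _ => Or.inr he)]
    rw [Int.card_Icc]
    obtain ⟨t, rfl⟩ := he
    omega
  · have h0 : (0 : ℤ) ∈ Finset.Icc (-(((a + 1) / 2 : ℕ) : ℤ)) (((a + 1) / 2 : ℕ) : ℤ) := by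
      simp only [Finset.mem_Icc]; omega
    have : Jset a =
        (Finset.Icc (-(((a + 1) / 2 : ℕ) : ℤ)) (((a + 1) / 2 : ℕ) : ℤ)).erase 0 := by
      ext j
      simp only [Jset, Finset.mem_filter, Finset.mem_erase, he, or_false]
      tauto
    rw [this, Finset.card_erase_of_mem h0, Int.card_Icc]
    have ho : a % 2 = 1 := Nat.odd_iff.mp (Nat.not_even_iff_odd.mp he)
    omega

noncomputable def JsetInt (a : ℕ) : Finset ℤ := (Jset a).filter (fun j => j.natAbs ≠ (a + 1) / 2)

lemma mem_JsetInt {a : ℕ} {j : ℤ} :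
    j ∈ JsetInt a ↔ j ∈ Jset a ∧ j.natAbs ≠ (a + 1) / 2 := Finset.mem_filter

lemma card_JsetInt {a : ℕ} (ha : 1 ≤ a) : (JsetInt a).card = a - 1 := by
  rcases Nat.lt_or_ge a 2 with h2 | h2
  · interval_cases a
    have : JsetInt 1 = ∅ := by
      ext j
      simp only [JsetInt, Finset.mem_filter, mem_Jset, Finset.notMem_empty, iff_false]
      rintro ⟨⟨h1, h3 | h3⟩, h4⟩
      · omega
      · exact (Nat.not_even_one h3).elim
    rw [this]; rfl
  · have : JsetInt a = Jset (a - 2) := by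
      ext j
      simp only [JsetInt, Finset.mem_filter, mem_Jset, Nat.even_iff]
      omega
    rw [this, card_Jset]
    omega

open MvPolynomial

lemma stage_one {k : Type*} [Field k] {n d : ℕ} (a : Fin (n + 1) → ℕ)
    (hd : d = ∑ i, a i) (J : Fin (n + 1) → Finset ℤ) (ndq : ℤ → k)
    (w : Fin (n + 1) → ℤ → k)
    (hw : ∀ i, ∀ p : ℕ, p ≤ a i →
      ∑ t ∈ J i, w i t * ndq t ^ p = if p = a i then 1 else 0) :
    ∑ j ∈ Fintype.piFinset J,
        (∏ i, w i (j i)) • (∑ i, C (ndq (j i)) * X i : MvPolynomial (Fin (n + 1)) k) ^ d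
      = ((Nat.multinomial Finset.univ a : k)) •
          ∏ i, (X i : MvPolynomial (Fin (n + 1)) k) ^ a i := by
  classical
  have key : ∀ b ∈ Finset.piAntidiag Finset.univ d,
      ∑ j ∈ Fintype.piFinset J, ((∏ i, w i (j i)) * ∏ i, ndq (j i) ^ b i)
        = if b = a then 1 else 0 := by
    intro b hb
    rw [Finset.mem_piAntidiag] at hb
    have hfac : ∑ j ∈ Fintype.piFinset J, ((∏ i, w i (j i)) * ∏ i, ndq (j i) ^ b i)
        = ∏ i, ∑ t ∈ J i, w i t * ndq t ^ b i := by
      rw [Finset.prod_univ_sum]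
      exact Finset.sum_congr rfl fun j _ => by rw [← Finset.prod_mul_distrib]
    rw [hfac]
    by_cases hba : b = a
    · subst hba
      rw [if_pos rfl]
      refine Finset.prod_eq_one fun i _ => by rw [hw i (b i) le_rfl, if_pos rfl]
    · rw [if_neg hba]
      have hex : ∃ i, b i < a i := by
        by_contra hc
        push_neg at hc
        apply hba
        funext i
        have hle : ∀ i ∈ Finset.univ, a i ≤ b i := fun i _ => hc i
        have := (Finset.sum_eq_sum_iff_of_le hle).mp (by rw [← hd, hb.1])
        exact ((this i (Finset.mem_univ i)).symm)
      obtain ⟨i, hi⟩ := hex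
      refine Finset.prod_eq_zero (Finset.mem_univ i) ?_
      rw [hw i (b i) (le_of_lt hi), if_neg (Nat.ne_of_lt hi)]
  have expand : ∀ j : Fin (n + 1) → ℤ,
      (∑ i, C (ndq (j i)) * X i : MvPolynomial (Fin (n + 1)) k) ^ d
        = ∑ b ∈ Finset.piAntidiag Finset.univ d,
            (Nat.multinomial Finset.univ b : MvPolynomial (Fin (n + 1)) k) *
              (C (∏ i, ndq (j i) ^ b i) * ∏ i, (X i) ^ b i) := by
    intro j
    rw [Finset.sum_pow_eq_sum_piAntidiag]
    refine Finset.sum_congr rfl fun b _ => ?_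
    congr 1
    simp only [mul_pow]
    rw [Finset.prod_mul_distrib]
    congr 1
    rw [map_prod (C : k →+* MvPolynomial (Fin (n + 1)) k)]
    exact Finset.prod_congr rfl fun i _ => (map_pow (C : k →+* MvPolynomial (Fin (n + 1)) k) _ _).symm
  have step1 : ∑ j ∈ Fintype.piFinset J,
      (∏ i, w i (j i)) • (∑ i, C (ndq (j i)) * X i : MvPolynomial (Fin (n + 1)) k) ^ d
      = ∑ b ∈ Finset.piAntidiag Finset.univ d, ∑ j ∈ Fintype.piFinset J,
          (Nat.multinomial Finset.univ b : MvPolynomial (Fin (n + 1)) k) *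
            (C ((∏ i, w i (j i)) * ∏ i, ndq (j i) ^ b i) * ∏ i, (X i) ^ b i) := by
    rw [Finset.sum_comm]
    refine Finset.sum_congr rfl fun j _ => ?_
    rw [expand j, Finset.smul_sum]
    refine Finset.sum_congr rfl fun b _ => ?_
    rw [smul_eq_C_mul, map_mul]
    ring
  rw [step1]
  have step2 : ∀ b ∈ Finset.piAntidiag Finset.univ d,
      ∑ j ∈ Fintype.piFinset J,
          (Nat.multinomial Finset.univ b : MvPolynomial (Fin (n + 1)) k) *
            (C ((∏ i, w i (j i)) * ∏ i, ndq (j i) ^ b i) * ∏ i, (X i) ^ b i)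
        = (Nat.multinomial Finset.univ b : MvPolynomial (Fin (n + 1)) k) *
            (C (if b = a then (1:k) else 0) * ∏ i, (X i) ^ b i) := by
    intro b hb
    rw [← key b hb, map_sum, Finset.sum_mul, Finset.mul_sum]
  rw [Finset.sum_congr rfl step2]
  have ha_mem : a ∈ Finset.piAntidiag Finset.univ d := by
    rw [Finset.mem_piAntidiag]
    exact ⟨hd.symm, fun i _ => Finset.mem_univ i⟩
  rw [Finset.sum_eq_single_of_mem a ha_mem
    (fun b _ hba => by rw [if_neg hba, map_zero, zero_mul, mul_zero])]
  rw [if_pos rfl, map_one, one_mul, smul_eq_C_mul,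
    map_natCast (C : k →+* MvPolynomial (Fin (n + 1)) k)]

lemma sign_split {α : Type*} [DecidableEq α] (neg : α → α) (hinv : ∀ s, neg (neg s) = s)
    (M : Finset α) (hcl : ∀ s ∈ M, neg s ∈ M) (hne : ∀ s ∈ M, neg s ≠ s) :
    ∃ R : Finset α, R ⊆ M ∧ (∀ s ∈ M, (s ∈ R ↔ neg s ∉ R)) ∧ 2 * R.card = M.card := by
  classical
  have hneginj : Function.Injective neg := Function.LeftInverse.injective hinv
  induction M using Finset.strongInduction with
  | _ M IH =>
  rcases M.eq_empty_or_nonempty with rfl | ⟨s₀, hs₀⟩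
  · exact ⟨∅, Finset.Subset.refl _, fun s hs => absurd hs (Finset.notMem_empty s), by simp⟩
  · have hns₀ : neg s₀ ∈ M := hcl s₀ hs₀
    have hngs : neg s₀ ≠ s₀ := hne s₀ hs₀
    set M' := (M.erase s₀).erase (neg s₀) with hM'
    have hM'sub : M' ⊂ M := by
      refine Finset.ssubset_of_subset_of_ssubset ?_ (Finset.erase_ssubset hs₀)
      exact Finset.erase_subset _ _
    have hmem' : ∀ t, t ∈ M' ↔ t ∈ M ∧ t ≠ s₀ ∧ t ≠ neg s₀ := by
      intro t
      simp only [hM', Finset.mem_erase]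
      tauto
    have hcl' : ∀ s ∈ M', neg s ∈ M' := by
      intro t ht
      rw [hmem'] at ht ⊢
      obtain ⟨htM, hts, htn⟩ := ht
      refine ⟨hcl t htM, ?_, fun h => hts (hneginj h)⟩
      intro h
      exact htn (by rw [← h, hinv t])
    have hne' : ∀ s ∈ M', neg s ≠ s := fun t ht => hne t ((hmem' t).mp ht).1
    obtain ⟨R', hR'sub, hR'iff, hR'card⟩ := IH M' hM'sub hcl' hne'
    have hs₀R' : s₀ ∉ R' := fun h => (((hmem' s₀).mp (hR'sub h)).2.1) rfl
    have hns₀R' : neg s₀ ∉ R' := fun h => (((hmem' (neg s₀)).mp (hR'sub h)).2.2) rfl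
    refine ⟨insert s₀ R', ?_, ?_, ?_⟩
    · intro t ht
      rcases Finset.mem_insert.mp ht with rfl | ht
      · exact hs₀
      · exact (Finset.erase_subset _ _) ((Finset.erase_subset _ _) (hR'sub ht))
    · intro s hs
      have hl : neg s₀ ∉ insert s₀ R' := by
        intro hc
        rcases Finset.mem_insert.mp hc with h | h
        · exact hngs h
        · exact hns₀R' h
      rcases eq_or_ne s s₀ with rfl | h1
      · simp only [Finset.mem_insert, true_or, true_iff]
        exact fun hc => hl (Finset.mem_insert.mpr hc)
      rcases eq_or_ne s (neg s₀) with rfl | h2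
      · have hnegs : neg (neg s₀) = s₀ := hinv s₀
        rw [hnegs]
        have hr : s₀ ∈ insert s₀ R' := Finset.mem_insert_self _ _
        simp [hl, hr]
      · have hsM' : s ∈ M' := (hmem' s).mpr ⟨hs, h1, h2⟩
        have hnegne : neg s ≠ s₀ := by
          intro h
          exact h2 (by rw [← hinv s, h])
        have e1 : (s ∈ insert s₀ R') ↔ s ∈ R' := by simp [Finset.mem_insert, h1]
        have e2 : (neg s ∈ insert s₀ R') ↔ neg s ∈ R' := by simp [Finset.mem_insert, hnegne]
        rw [e1, e2]
        exact hR'iff s hsM'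
    · rw [Finset.card_insert_of_notMem hs₀R']
      have hcard' : M'.card + 2 = M.card := by
        rw [hM', Finset.card_erase_of_mem, Finset.card_erase_of_mem hs₀]
        · have : 1 ≤ M.card := Finset.card_pos.mpr ⟨s₀, hs₀⟩
          have h2 : 2 ≤ M.card := by
            rcases Finset.one_lt_card.mpr ⟨s₀, hs₀, neg s₀, hns₀, hngs.symm⟩ with h
            omega
          omega
        · exact Finset.mem_erase.mpr ⟨hngs, hns₀⟩
      omega

/-- **Waring rank bound for monomials over an infinite field.**  Let `k` be an infinite
field whose characteristic is zero or strictly greater than `d`.  For every monomial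
`M = X_0^{a_0} ⋯ X_n^{a_n}` in `k[X_0,…,X_n]` with all `a_i > 0` and `d = ∑ a_i`,
there is a Waring decomposition `M = ∑_{j=1}^r λ_j L_j^d` with `λ_j ∈ k`, `L_j` linear
forms (homogeneous of degree 1), and `r ≤ (1/2)(∏ (a_i + 1) − ∏ (a_i − 1))`; in
particular `rank_k(M) ≤ (1/2)(∏ (a_i + 1) − ∏ (a_i − 1))`. -/
theorem waring_rank_bound_monomial_infinite_field (k : Type*) [Field k] [Infinite k]
    (n : ℕ) (a : Fin (n + 1) → ℕ) (ha : ∀ i, 0 < a i) (d : ℕ) (hd : d = ∑ i, a i)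
    (hchar : ringChar k = 0 ∨ d < ringChar k) :
    ∃ (r : ℕ) (lam : Fin r → k) (L : Fin r → MvPolynomial (Fin (n + 1)) k),
      (r : ℚ) ≤ (1 / 2) * ((∏ i, ((a i : ℚ) + 1)) - ∏ i, ((a i : ℚ) - 1)) ∧
      (∀ j, (L j).IsHomogeneous 1) ∧
      (∏ i, (X i : MvPolynomial (Fin (n + 1)) k) ^ a i) = ∑ j, lam j • L j ^ d := by
  classical
  rcases Nat.eq_zero_or_pos n with hn | hn
  · subst hn
    refine ⟨1, fun _ => 1, fun _ => X 0, ?_, fun j => isHomogeneous_X _ _, ?_⟩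
    · rw [Fin.prod_univ_one, Fin.prod_univ_one]
      push_cast
      linarith [ha 0]
    · rw [Fin.sum_univ_one, one_smul, Fin.prod_univ_one, hd, Fin.sum_univ_one]
  -- main case
  have hd_ge : ∀ i, a i ≤ d := fun i =>
    hd ▸ Finset.single_le_sum (fun _ _ => Nat.zero_le _) (Finset.mem_univ i)
  have hd2 : 2 ≤ d := by
    have h1 : n + 1 ≤ ∑ i, a i := by
      calc n + 1 = ∑ _i : Fin (n + 1), 1 := by simp
        _ ≤ ∑ i, a i := Finset.sum_le_sum fun i _ => ha i
    omega
  have hcharne : ∀ m : ℕ, 0 < m → m ≤ d → (m : k) ≠ 0 := by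
    intro m hm hmd
    rcases hchar with h0 | hp
    · have hcp : CharP k 0 := h0 ▸ ringChar.charP k
      haveI : CharZero k := @CharP.charP_to_charZero k _ hcp
      exact_mod_cast Nat.cast_ne_zero.mpr (by omega)
    · intro hcast
      have hdvd : ringChar k ∣ m := (CharP.cast_eq_zero_iff k (ringChar k) m).mp hcast
      have := Nat.le_of_dvd hm hdvd
      omega
  have h2k : (2 : k) ≠ 0 := by
    have := hcharne 2 (by norm_num) hd2
    exact_mod_cast this
  obtain ⟨q, hq0, hqgood⟩ := exists_good_q k (2 * d)
  have hinj : Set.InjOn (nd q) {j : ℤ | j.natAbs ≤ d} := nd_injOn hq0 h2k hqgood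
  set c : Fin (n + 1) → ℕ := fun i => (a i + 1) / 2 with hcdef
  have hc1 : ∀ i, 1 ≤ c i := fun i => by have := ha i; simp only [hcdef]; omega
  have hcd : ∀ i, c i ≤ d := fun i => by
    have := hd_ge i; have := ha i; simp only [hcdef]; omega
  set J : Fin (n + 1) → Finset ℤ := fun i => Jset (a i) with hJdef
  have hJmem : ∀ i (j : ℤ), j ∈ J i ↔ (j.natAbs ≤ c i ∧ (j ≠ 0 ∨ Even (a i))) :=
    fun i j => mem_Jset
  have hJsub : ∀ i, (J i : Set ℤ) ⊆ {j : ℤ | j.natAbs ≤ d} := by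
    intro i j hj
    have := ((hJmem i j).mp hj).1
    have := hcd i
    simp only [Set.mem_setOf_eq]
    omega
  have hwx : ∀ i, ∃ w : ℤ → k, ∀ p : ℕ, p ≤ a i →
      ∑ t ∈ J i, w t * nd q t ^ p = if p = a i then 1 else 0 :=
    fun i => finset_dual (J i) (nd q) (a i) (card_Jset (a i)) (hinj.mono (hJsub i))
  choose w hwmom using hwx
  set G : Finset (Fin (n + 1) → ℤ) := Fintype.piFinset J with hGdef
  set Lf : (Fin (n + 1) → ℤ) → MvPolynomial (Fin (n + 1)) k :=
    fun s => ∑ i, C (nd q (s i)) * X i with hLfdef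
  set mA : ℕ := Nat.multinomial Finset.univ a with hmAdef
  have hstage1 : ∑ j ∈ G, (∏ i, w i (j i)) • Lf j ^ d = (mA : k) • ∏ i, X i ^ a i :=
    stage_one a hd J (nd q) w hwmom
  have hfactne : ∀ m : ℕ, m ≤ d → ((Nat.factorial m : ℕ) : k) ≠ 0 := by
    intro m
    induction m with
    | zero => intro _; simp
    | succ m ih =>
      intro hle
      rw [Nat.factorial_succ, Nat.cast_mul]
      exact mul_ne_zero (hcharne (m + 1) (Nat.succ_pos m) hle) (ih (by omega))
  have hmAne : (mA : k) ≠ 0 := by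
    intro h0
    have hspec := Nat.multinomial_spec Finset.univ a
    have hcast : ((∏ i, Nat.factorial (a i) : ℕ) : k) * (mA : k)
        = ((Nat.factorial (∑ i, a i) : ℕ) : k) := by
      rw [hmAdef]
      exact_mod_cast congrArg (Nat.cast : ℕ → k) hspec
    rw [h0, mul_zero] at hcast
    exact hfactne (∑ i, a i) (le_of_eq hd.symm) hcast.symm
  set coef : (Fin (n + 1) → ℤ) → k := fun j => (mA : k)⁻¹ * ∏ i, w i (j i) with hcoefdef
  have hmain : (∏ i, (X i : MvPolynomial (Fin (n + 1)) k) ^ a i)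
      = ∑ j ∈ G, coef j • Lf j ^ d := by
    calc (∏ i, (X i : MvPolynomial (Fin (n + 1)) k) ^ a i)
        = (mA : k)⁻¹ • ((mA : k) • ∏ i, (X i : MvPolynomial (Fin (n + 1)) k) ^ a i) := by
          rw [smul_smul, inv_mul_cancel₀ hmAne, one_smul]
      _ = (mA : k)⁻¹ • ∑ j ∈ G, (∏ i, w i (j i)) • Lf j ^ d := by rw [hstage1]
      _ = ∑ j ∈ G, coef j • Lf j ^ d := by
          rw [Finset.smul_sum]
          exact Finset.sum_congr rfl fun j _ => (smul_smul _ _ _)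
  have hL0 : Lf (0 : Fin (n + 1) → ℤ) = 0 := by
    simp [hLfdef]
  set G' : Finset (Fin (n + 1) → ℤ) := G.erase 0 with hG'def
  have hmain' : (∏ i, (X i : MvPolynomial (Fin (n + 1)) k) ^ a i)
      = ∑ j ∈ G', coef j • Lf j ^ d := by
    rw [hmain]
    exact (Finset.sum_erase _ (by rw [hL0, zero_pow (by omega : d ≠ 0), smul_zero])).symm
  -- grouping
  set ShiftV : (Fin (n + 1) → ℤ) → (Fin (n + 1) → ℤ) := fun s i => shiftI (s i) with hShiftVdef
  have hShiftIter : ∀ (m : ℕ) s i, (ShiftV^[m] s) i = shiftI^[m] (s i) :=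
    fun m s i => iterate_pi_apply shiftI m s i
  set μf : (Fin (n + 1) → ℤ) → ℕ := fun s =>
    if h : (Finset.univ.filter (fun i => s i ≠ 0)).Nonempty
    then ((Finset.univ.filter (fun i => s i ≠ 0)).image
        (fun i => c i - (s i).natAbs)).min' (h.image _)
    else 0 with hμfdef
  have hsupp_ne : ∀ j, j ≠ (0 : Fin (n + 1) → ℤ) →
      (Finset.univ.filter (fun i => j i ≠ 0)).Nonempty := by
    intro j hjne
    by_contra hcon
    rw [Finset.not_nonempty_iff_eq_empty, Finset.filter_eq_empty_iff] at hcon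
    exact hjne (funext fun i => by
      have := hcon (Finset.mem_univ i); simpa using this)
  have hμ_le : ∀ j, j ≠ 0 → ∀ i, j i ≠ 0 → μf j ≤ c i - (j i).natAbs := by
    intro j hjne i hi
    have hne := hsupp_ne j hjne
    rw [hμfdef]
    simp only [dif_pos hne]
    exact Finset.min'_le _ _ (Finset.mem_image_of_mem _ (by simp [hi]))
  have hμ_attain : ∀ j, j ≠ 0 → ∃ i, j i ≠ 0 ∧ c i - (j i).natAbs = μf j := by
    intro j hjne
    have hne := hsupp_ne j hjne
    have hmem := Finset.min'_mem ((Finset.univ.filter (fun i => j i ≠ 0)).image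
        (fun i => c i - (j i).natAbs)) (hne.image _)
    rw [Finset.mem_image] at hmem
    obtain ⟨i, hi, hval⟩ := hmem
    refine ⟨i, by simpa using hi, ?_⟩
    rw [hval, hμfdef]
    simp only [dif_pos hne]
  set rep0 : (Fin (n + 1) → ℤ) → (Fin (n + 1) → ℤ) := fun j => ShiftV^[μf j] j with hrep0def
  have hrep0_coord_zero : ∀ j i, j i = 0 → rep0 j i = 0 := by
    intro j i hji
    rw [hrep0def]
    simp only [hShiftIter]
    rw [hji]
    exact Function.iterate_fixed shiftI_zero _
  have hrep0_coord : ∀ j i, j i ≠ 0 → (rep0 j i).natAbs = (j i).natAbs + μf j := by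
    intro j i hji
    rw [hrep0def]
    simp only [hShiftIter]
    exact shiftI_iter_natAbs _ hji
  have hrep0_ne : ∀ j, j ≠ 0 → rep0 j ≠ 0 := by
    intro j hjne hcon
    obtain ⟨i, hi, _⟩ := hμ_attain j hjne
    have h0 : rep0 j i = 0 := by rw [hcon]; rfl
    rw [hrep0def] at h0
    simp only [hShiftIter] at h0
    exact hi (shiftI_iter_eq_zero.mp h0)
  set MaxS : Finset (Fin (n + 1) → ℤ) :=
    G.filter (fun s => ∃ i, (s i).natAbs = c i) with hMaxSdef
  have hGneg : ∀ s, s ∈ G → -s ∈ G := by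
    intro s hs
    rw [hGdef, Fintype.mem_piFinset] at hs ⊢
    intro i
    rw [hJmem]
    have hthis := (hJmem i (s i)).mp (hs i)
    simp only [Pi.neg_apply, Int.natAbs_neg, ne_eq, neg_eq_zero]
    simpa using hthis
  have hMaxneg : ∀ s ∈ MaxS, -s ∈ MaxS := by
    intro s hs
    rw [hMaxSdef, Finset.mem_filter] at hs ⊢
    obtain ⟨hsG, i, hi⟩ := hs
    exact ⟨hGneg s hsG, i, by simpa [Int.natAbs_neg] using hi⟩
  have hMaxne0 : ∀ s ∈ MaxS, s ≠ 0 := by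
    intro s hs hcon
    rw [hMaxSdef, Finset.mem_filter] at hs
    obtain ⟨_, i, hi⟩ := hs
    have hzero : s i = 0 := by rw [hcon]; rfl
    rw [hzero, Int.natAbs_zero] at hi
    have := hc1 i
    omega
  have hMaxnegne : ∀ s ∈ MaxS, -s ≠ s := by
    intro s hs hcon
    apply hMaxne0 s hs
    funext i
    have h1 := congrFun hcon i
    simp only [Pi.neg_apply] at h1
    show s i = 0
    omega
  obtain ⟨R, hRsub, hRiff, hRcard⟩ :=
    sign_split (fun s => -s) (fun s => neg_neg s) MaxS hMaxneg hMaxnegne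
  have hrep0Max : ∀ j, j ∈ G' → rep0 j ∈ MaxS := by
    intro j hj
    obtain ⟨hjne, hjG⟩ := Finset.mem_erase.mp hj
    rw [hMaxSdef, Finset.mem_filter]
    constructor
    · rw [hGdef, Fintype.mem_piFinset] at hjG ⊢
      intro i
      rw [hJmem]
      have hji := (hJmem i (j i)).mp (hjG i)
      by_cases h0 : j i = 0
      · rw [hrep0_coord_zero j i h0]
        rw [h0] at hji
        exact hji
      · have hnat : (rep0 j i).natAbs = (j i).natAbs + μf j := hrep0_coord j i h0
        have hle := hμ_le j hjne i h0
        have habs : (j i).natAbs ≤ c i := hji.1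
        refine ⟨by omega, Or.inl fun hcon => ?_⟩
        rw [hcon, Int.natAbs_zero] at hnat
        exact h0 (Int.natAbs_eq_zero.mp (by omega))
    · obtain ⟨i₀, hi₀ne, hi₀⟩ := hμ_attain j hjne
      refine ⟨i₀, ?_⟩
      have hnat := hrep0_coord j i₀ hi₀ne
      have habs : (j i₀).natAbs ≤ c i₀ := by
        rw [hGdef, Fintype.mem_piFinset] at hjG
        exact ((hJmem i₀ (j i₀)).mp (hjG i₀)).1
      omega
  -- linear form relations
  have hLrep0 : ∀ j, Lf (rep0 j) = C (q ^ μf j) * Lf j := by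
    intro j
    simp only [hLfdef]
    rw [Finset.mul_sum]
    refine Finset.sum_congr rfl fun i _ => ?_
    have hcoordeq : rep0 j i = shiftI^[μf j] (j i) := by
      simp only [hrep0def]
      exact hShiftIter _ _ _
    rw [hcoordeq, nd_shiftI_iter, map_mul, mul_assoc]
  have hLneg : ∀ s, Lf (-s) = - Lf s := by
    intro s
    simp only [hLfdef, Pi.neg_apply, nd_neg, map_neg]
    rw [← Finset.sum_neg_distrib]
    exact Finset.sum_congr rfl fun i _ => by ring
  set rep : (Fin (n + 1) → ℤ) → (Fin (n + 1) → ℤ) :=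
    fun j => if rep0 j ∈ R then rep0 j else -(rep0 j) with hrepdef
  have hrepR : ∀ j, j ∈ G' → rep j ∈ R := by
    intro j hj
    simp only [hrepdef]
    by_cases hmem : rep0 j ∈ R
    · rwa [if_pos hmem]
    · rw [if_neg hmem]
      have hiff := hRiff (rep0 j) (hrep0Max j hj)
      by_contra hcon
      exact hmem (hiff.mpr hcon)
  set eps : (Fin (n + 1) → ℤ) → k :=
    fun j => (if rep0 j ∈ R then (1 : k) else -1) * q ^ μf j with hepsdef
  have heps_ne : ∀ j, eps j ≠ 0 := by
    intro j
    simp only [hepsdef]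
    refine mul_ne_zero ?_ (pow_ne_zero _ hq0)
    split
    · exact one_ne_zero
    · exact neg_ne_zero.mpr one_ne_zero
  have hLrep : ∀ j, Lf (rep j) = C (eps j) * Lf j := by
    intro j
    simp only [hrepdef, hepsdef]
    by_cases hmem : rep0 j ∈ R
    · rw [if_pos hmem, if_pos hmem, one_mul, hLrep0]
    · rw [if_neg hmem, if_neg hmem, hLneg, hLrep0, map_mul, map_neg, map_one]
      ring
  have hLpow : ∀ j, Lf j ^ d = C ((eps j ^ d)⁻¹) * Lf (rep j) ^ d := by
    intro j
    have h1 : Lf (rep j) ^ d = C (eps j ^ d) * Lf j ^ d := by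
      rw [hLrep j, mul_pow, ← map_pow]
    rw [h1, ← mul_assoc, ← map_mul, inv_mul_cancel₀ (pow_ne_zero d (heps_ne j)), map_one, one_mul]
  -- fiberwise regrouping
  set lamR : (Fin (n + 1) → ℤ) → k :=
    fun s => ∑ j ∈ G'.filter (fun j => rep j = s), coef j * (eps j ^ d)⁻¹ with hlamRdef
  have hfinal : (∏ i, (X i : MvPolynomial (Fin (n + 1)) k) ^ a i)
      = ∑ s ∈ R, lamR s • Lf s ^ d := by
    rw [hmain', ← Finset.sum_fiberwise_of_maps_to hrepR (fun j => coef j • Lf j ^ d)]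
    refine Finset.sum_congr rfl fun s hs => ?_
    simp only [hlamRdef]
    rw [Finset.sum_smul]
    refine Finset.sum_congr rfl fun j hj => ?_
    obtain ⟨hjG', hrepj⟩ := Finset.mem_filter.mp hj
    rw [hLpow j, hrepj, smul_eq_C_mul, smul_eq_C_mul, ← mul_assoc, ← map_mul]
  -- cardinalities
  have hGcard : G.card = ∏ i, (a i + 1) := by
    rw [hGdef, Fintype.card_piFinset]
    exact Finset.prod_congr rfl fun i _ => card_Jset (a i)
  have hIntS : G.filter (fun s => ¬ ∃ i, (s i).natAbs = c i)
      = Fintype.piFinset (fun i => JsetInt (a i)) := by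
    ext s
    simp only [Finset.mem_filter, hGdef, Fintype.mem_piFinset]
    constructor
    · rintro ⟨hsJ, hnex⟩ i
      rw [mem_JsetInt]
      push_neg at hnex
      exact ⟨hsJ i, hnex i⟩
    · intro h
      constructor
      · intro i
        exact ((mem_JsetInt).mp (h i)).1
      · push_neg
        intro i
        exact ((mem_JsetInt).mp (h i)).2
  have hIntcard : (G.filter (fun s => ¬ ∃ i, (s i).natAbs = c i)).card = ∏ i, (a i - 1) := by
    rw [hIntS, Fintype.card_piFinset]
    exact Finset.prod_congr rfl fun i _ => card_JsetInt (ha i)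
  have hMaxcard : MaxS.card + ∏ i, (a i - 1) = ∏ i, (a i + 1) := by
    rw [← hGcard, ← hIntcard, hMaxSdef]
    exact Finset.card_filter_add_card_filter_not _
  -- final assembly
  set r : ℕ := R.card with hrdef
  have hequiv : Fin r ≃ {x // x ∈ R} := (R.equivFin).symm
  refine ⟨r, fun t => lamR ((hequiv t) : Fin (n + 1) → ℤ),
    fun t => Lf ((hequiv t) : Fin (n + 1) → ℤ), ?_, ?_, ?_⟩
  · -- the bound
    have h2r : 2 * r + ∏ i, (a i - 1) = ∏ i, (a i + 1) := by
      rw [hrdef, hRcard]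
      exact hMaxcard
    have hcast1 : ((∏ i, (a i + 1) : ℕ) : ℚ) = ∏ i, ((a i : ℚ) + 1) := by push_cast; rfl
    have hcast2 : ((∏ i, (a i - 1) : ℕ) : ℚ) = ∏ i, ((a i : ℚ) - 1) := by
      rw [Nat.cast_prod]
      refine Finset.prod_congr rfl fun i _ => ?_
      have := ha i
      push_cast [Nat.cast_sub (ha i)]
      ring
    have hq2 : 2 * (r : ℚ) + ∏ i, ((a i : ℚ) - 1) = ∏ i, ((a i : ℚ) + 1) := by
      rw [← hcast1, ← hcast2]
      exact_mod_cast congrArg (Nat.cast : ℕ → ℚ) h2r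
    linarith
  · -- homogeneity
    intro t
    refine IsHomogeneous.sum _ _ _ fun i _ => ?_
    have := (isHomogeneous_C (Fin (n + 1)) (nd q ((hequiv t : Fin (n + 1) → ℤ) i))).mul
      (isHomogeneous_X k i)
    simpa using this
  · -- the identity
    rw [hfinal]
    rw [← Finset.sum_attach R (fun s => lamR s • Lf s ^ d)]
    exact (Equiv.sum_comp hequiv _).symm
end

section
/- Let n ≥ 0 and D ≥ n + 1 be integers. Let K(n, D) denote the number of triples (T, k, s), where T is a nonempty subset of {0, 1, …, n}, k : T → ℤ_{≥0} satisfies ∑_{i∈T} k_i ≤ ⌊(D − |T|)/2⌋ and min_{i∈T} k_i = 0, and s : T → {0, 1} satisfies s_{min T} = 0. Then K(n, D) = ∑_{r=1}^{n+1} ( C(⌊(D − r)/2⌋ + r, r) − C(⌊(D − r)/2⌋, r) ) · 2^{r−1} · C(n + 1, r). -/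
open Finset

lemma sum_aux (M r : ℕ) :
    ∑ b ∈ Finset.range (M + 1), (b + r - 1).choose b = (M + r).choose r := by
  cases r with
  | zero =>
    rw [Finset.sum_eq_single_of_mem 0 (by simp)]
    · simp
    · intro b _ hb
      exact Nat.choose_eq_zero_of_lt (by omega)
  | succ m =>
    have h : ∀ b, (b + (m + 1) - 1).choose b = (b + m).choose m := by
      intro b
      have h1 : b + (m + 1) - 1 = b + m := by omega
      rw [h1, ← Nat.choose_symm (Nat.le_add_left m b)]
      congr 1
      omega
    simp only [h]
    rw [Nat.sum_range_add_choose M m]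
    congr 1

lemma my_card_piAntidiag {ι : Type*} [DecidableEq ι] (s : Finset ι) (n : ℕ) :
    (Finset.piAntidiag s n).card = (n + s.card - 1).choose n := by
  induction s using Finset.cons_induction generalizing n with
  | empty =>
    rw [Finset.piAntidiag_empty]
    rcases Nat.eq_zero_or_pos n with rfl | hn
    · simp
    · rw [if_neg (by omega), Finset.card_empty,
        eq_comm, Nat.choose_eq_zero_iff]
      simp; omega
  | cons i s hi ih =>
    rw [Finset.piAntidiag_cons hi, Finset.card_disjiUnion]
    simp only [Finset.card_map, ih]
    rw [Finset.Nat.sum_antidiagonal_eq_sum_range_succ_mk]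
    simp only []
    have := Finset.sum_range_reflect (fun b => (b + s.card - 1).choose b) (n + 1)
    have h2 : ∀ x ∈ Finset.range (n + 1),
        ((x, n - x).2 + s.card - 1).choose (x, n - x).2
          = (fun b => (b + s.card - 1).choose b) (n + 1 - 1 - x) := by
      intro x hx
      simp only []
      congr 1 <;> omega
    rw [Finset.sum_congr rfl h2, this, sum_aux, Finset.card_cons]
    rw [← Nat.choose_symm (k := s.card) (by omega)]
    congr 1
    omega

/-- Functions supported on `T` with sum over `T` at most `M`. -/
def Bset {ι : Type*} [Fintype ι] [DecidableEq ι] (T : Finset ι) (M : ℕ) : Finset (ι → ℕ) :=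
  (Finset.range (M + 1)).biUnion fun j => Finset.piAntidiag T j

lemma mem_Bset {ι : Type*} [Fintype ι] [DecidableEq ι] {T : Finset ι} {M : ℕ} {f : ι → ℕ} :
    f ∈ Bset T M ↔ (∀ i, f i ≠ 0 → i ∈ T) ∧ ∑ i ∈ T, f i ≤ M := by
  simp only [Bset, Finset.mem_biUnion, Finset.mem_range, Finset.mem_piAntidiag,
    Nat.lt_succ_iff]
  constructor
  · rintro ⟨j, hj, rfl, h2⟩
    exact ⟨h2, hj⟩
  · rintro ⟨h2, h1⟩
    exact ⟨_, h1, rfl, h2⟩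

lemma card_Bset {ι : Type*} [Fintype ι] [DecidableEq ι] (T : Finset ι) (M : ℕ) :
    (Bset T M).card = (M + T.card).choose T.card := by
  rw [Bset, Finset.card_biUnion]
  · simp only [my_card_piAntidiag]
    rw [sum_aux M T.card, ← Nat.choose_symm (k := T.card) (by omega)]
  · intro x _ y _ hxy
    rw [Function.onFun, Finset.disjoint_left]
    intro f hf hg
    rw [Finset.mem_piAntidiag] at hf hg
    exact hxy (hf.1 ▸ hg.1.symm ▸ rfl)

lemma card_Bset_pos {ι : Type*} [Fintype ι] [DecidableEq ι] (T : Finset ι) (M : ℕ) :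
    ((Bset T M).filter fun f => ∀ i ∈ T, f i ≠ 0).card = M.choose T.card := by
  rcases le_or_gt T.card M with h | h
  · rw [show M.choose T.card = ((M - T.card) + T.card).choose T.card by
      rw [Nat.sub_add_cancel h], ← card_Bset T (M - T.card)]
    refine Finset.card_bij' (fun f _ => fun i => if i ∈ T then f i - 1 else 0)
      (fun g _ => fun i => if i ∈ T then g i + 1 else 0) ?_ ?_ ?_ ?_
    · intro f hf
      rw [Finset.mem_filter, mem_Bset] at hf
      obtain ⟨⟨hsupp, hsum⟩, hpos⟩ := hf
      rw [mem_Bset]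
      constructor
      · intro i hi
        by_contra hiT
        simp [hiT] at hi
      · have e1 : ∑ i ∈ T, (if i ∈ T then f i - 1 else 0) = ∑ i ∈ T, (f i - 1) :=
          Finset.sum_congr rfl fun i hi => by simp [hi]
        have key : (∑ i ∈ T, (f i - 1)) + T.card = ∑ i ∈ T, f i := by
          rw [Finset.card_eq_sum_ones, ← Finset.sum_add_distrib]
          exact Finset.sum_congr rfl fun i hi => by have := hpos i hi; omega
        rw [e1]
        omega
    · intro g hg
      rw [mem_Bset] at hg
      obtain ⟨hsupp, hsum⟩ := hg
      rw [Finset.mem_filter, mem_Bset]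
      refine ⟨⟨fun i hi => ?_, ?_⟩, fun i hi => by simp [hi]⟩
      · by_contra hiT
        simp [hiT] at hi
      · have e1 : ∑ i ∈ T, (if i ∈ T then g i + 1 else 0) = (∑ i ∈ T, g i) + T.card := by
          rw [Finset.card_eq_sum_ones, ← Finset.sum_add_distrib]
          exact Finset.sum_congr rfl fun i hi => by simp [hi]
        rw [e1]
        omega
    · intro f hf
      rw [Finset.mem_filter, mem_Bset] at hf
      obtain ⟨⟨hsupp, hsum⟩, hpos⟩ := hf
      funext i
      by_cases hi : i ∈ T
      · have := hpos i hi
        simp only [hi, if_true]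
        omega
      · have := hsupp i
        simp only [hi, if_false]
        by_contra hne
        exact hi (this (by omega))
    · intro g hg
      rw [mem_Bset] at hg
      funext i
      by_cases hi : i ∈ T
      · simp [hi]
      · have := hg.1 i
        simp only [hi, if_false]
        by_contra hne
        exact hi (this (by omega))
  · rw [Nat.choose_eq_zero_of_lt h, Finset.card_eq_zero, Finset.filter_eq_empty_iff]
    intro f hf
    rw [mem_Bset] at hf
    intro hpos
    have : T.card ≤ ∑ i ∈ T, f i := by
      rw [Finset.card_eq_sum_ones]
      exact Finset.sum_le_sum fun i hi => Nat.one_le_iff_ne_zero.2 (hpos i hi)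
    omega

lemma card_Kset {ι : Type*} [Fintype ι] [DecidableEq ι] (T : Finset ι) (M : ℕ) :
    ((Bset T M).filter fun f => ∃ i ∈ T, f i = 0).card
      = (M + T.card).choose T.card - M.choose T.card := by
  have h2 : (Bset T M).filter (fun f => ∃ i ∈ T, f i = 0)
      = (Bset T M) \ ((Bset T M).filter fun f => ∀ i ∈ T, f i ≠ 0) := by
    ext f
    simp only [Finset.mem_filter, Finset.mem_sdiff]
    constructor
    · rintro ⟨hf, i, hi, h0⟩
      exact ⟨hf, fun hand => hand.2 i hi h0⟩
    · rintro ⟨hf, h⟩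
      refine ⟨hf, ?_⟩
      by_contra hc
      push_neg at hc
      exact h ⟨hf, hc⟩
  rw [h2, Finset.card_sdiff_of_subset (Finset.filter_subset _ _), card_Bset_pos, card_Bset]

lemma card_Sset {ι : Type*} [DecidableEq ι] [Fintype ι] (U : Finset ι)
    [inst : DecidablePred fun s : ι → Fin 2 => ∀ i ∉ U, s i = 0] :
    (Finset.univ.filter fun s : ι → Fin 2 => ∀ i ∉ U, s i = 0).card = 2 ^ U.card := by
  have : 2 ^ U.card = (Finset.univ : Finset (↥U → Fin 2)).card := by
    simp [Fintype.card_fun]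
  rw [this]
  refine Finset.card_bij' (fun s _ => fun u : ↥U => s u.1)
    (fun g _ => fun i => if h : i ∈ U then g ⟨i, h⟩ else 0) ?_ ?_ ?_ ?_
  · intro s _
    exact Finset.mem_univ _
  · intro g _
    rw [Finset.mem_filter]
    refine ⟨Finset.mem_univ _, fun i hi => by simp [hi]⟩
  · intro s hs
    rw [Finset.mem_filter] at hs
    funext i
    by_cases hi : i ∈ U
    · simp [hi]
    · simp [hi, hs.2 i hi]
  · intro g _
    funext u
    simp [u.2]

def KF (n D : ℕ) (T : Finset (Fin (n + 1))) : Finset (Fin (n + 1) → ℕ) :=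
  (Bset T ((D - T.card) / 2)).filter fun f => ∃ i ∈ T, f i = 0

def SF (n : ℕ) (T : Finset (Fin (n + 1))) : Finset (Fin (n + 1) → Fin 2) :=
  Finset.univ.filter fun s =>
    (∀ i ∉ T, s i = 0) ∧ ∀ i ∈ T, (∀ j ∈ T, i ≤ j) → s i = 0

lemma card_SF (n : ℕ) (T : Finset (Fin (n + 1))) (hT : T.Nonempty) :
    (SF n T).card = 2 ^ (T.card - 1) := by
  have hmin := T.min'_mem hT
  have hEq : SF n T
      = Finset.univ.filter fun s : Fin (n + 1) → Fin 2 =>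
          ∀ i ∉ T.erase (T.min' hT), s i = 0 := by
    unfold SF
    apply Finset.filter_congr
    intro s _
    constructor
    · rintro ⟨h1, h2⟩ i hi
      by_cases hiT : i ∈ T
      · have hieq : i = T.min' hT := by
          by_contra hne
          exact hi (Finset.mem_erase.2 ⟨hne, hiT⟩)
        subst hieq
        exact h2 _ hiT fun j hj => T.min'_le j hj
      · exact h1 i hiT
    · intro h
      constructor
      · intro i hiT
        exact h i fun hc => hiT (Finset.mem_of_mem_erase hc)
      · intro i hiT hle
        have hieq : i = T.min' hT := le_antisymm (hle _ hmin) (T.min'_le i hiT)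
        refine h i ?_
        rw [hieq]
        exact Finset.notMem_erase _ _
  rw [hEq, card_Sset, Finset.card_erase_of_mem hmin]

/-- **Formula for `K(n, D)`.**  Let `n ≥ 0` and `D ≥ n + 1`.  `K(n,D)` is the number of
triples `(T, k, s)` where `T` is a nonempty subset of `{0,…,n}`, `k : T → ℤ_{≥0}`
satisfies `∑_{i∈T} k_i ≤ ⌊(D − |T|)/2⌋` and `min_{i∈T} k_i = 0`, and `s : T → {0,1}`
satisfies `s_{min T} = 0` (`k` and `s` are encoded as functions on `{0,…,n}` vanishing
off `T`; `min_{i∈T} k_i = 0` means some `k_i`, `i ∈ T`, vanishes, and the condition on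
`s` is imposed at the least element of `T`).  Then
`K(n,D) = ∑_{r=1}^{n+1} (C(⌊(D−r)/2⌋ + r, r) − C(⌊(D−r)/2⌋, r)) · 2^{r−1} · C(n+1, r)`. -/
theorem K_n_D_formula (n D : ℕ) (hD : n + 1 ≤ D) :
    {q : Finset (Fin (n + 1)) × (Fin (n + 1) → ℕ) × (Fin (n + 1) → Fin 2) |
        q.1.Nonempty ∧
        (∀ i ∉ q.1, q.2.1 i = 0) ∧
        (∀ i ∉ q.1, q.2.2 i = 0) ∧
        (∑ i ∈ q.1, q.2.1 i) ≤ (D - q.1.card) / 2 ∧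
        (∃ i ∈ q.1, q.2.1 i = 0) ∧
        (∀ i ∈ q.1, (∀ j ∈ q.1, i ≤ j) → q.2.2 i = 0)}.ncard
      = ∑ r ∈ Finset.Icc 1 (n + 1),
          (((D - r) / 2 + r).choose r - ((D - r) / 2).choose r) * 2 ^ (r - 1) *
            (n + 1).choose r := by
  classical
  set A : Finset (Finset (Fin (n + 1)) × (Fin (n + 1) → ℕ) × (Fin (n + 1) → Fin 2)) :=
    Finset.univ.biUnion fun T => ((KF n D T) ×ˢ (SF n T)).image fun p => (T, p.1, p.2) with hA
  have hmem : ∀ (T : Finset (Fin (n + 1))) (k : Fin (n + 1) → ℕ) (s : Fin (n + 1) → Fin 2),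
      (T, k, s) ∈ A ↔ k ∈ KF n D T ∧ s ∈ SF n T := by
    intro T k s
    rw [hA, Finset.mem_biUnion]
    constructor
    · rintro ⟨T', -, hTq⟩
      rw [Finset.mem_image] at hTq
      obtain ⟨⟨a, b⟩, hp, heq⟩ := hTq
      rw [Finset.mem_product] at hp
      obtain ⟨rfl, rfl, rfl⟩ : T' = T ∧ a = k ∧ b = s := by
        simpa [Prod.ext_iff] using heq
      exact hp
    · rintro ⟨h1, h2⟩
      exact ⟨T, Finset.mem_univ _, Finset.mem_image.2
        ⟨(k, s), Finset.mem_product.2 ⟨h1, h2⟩, rfl⟩⟩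
  have hset : {q : Finset (Fin (n + 1)) × (Fin (n + 1) → ℕ) × (Fin (n + 1) → Fin 2) |
        q.1.Nonempty ∧
        (∀ i ∉ q.1, q.2.1 i = 0) ∧
        (∀ i ∉ q.1, q.2.2 i = 0) ∧
        (∑ i ∈ q.1, q.2.1 i) ≤ (D - q.1.card) / 2 ∧
        (∃ i ∈ q.1, q.2.1 i = 0) ∧
        (∀ i ∈ q.1, (∀ j ∈ q.1, i ≤ j) → q.2.2 i = 0)} = ↑A := by
    ext ⟨T, k, s⟩
    rw [Set.mem_setOf_eq, Finset.mem_coe, hmem]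
    unfold KF SF
    rw [Finset.mem_filter, mem_Bset, Finset.mem_filter]
    constructor
    · rintro ⟨hne, hk0, hs0, hsum, hex, hmin⟩
      refine ⟨⟨⟨fun i hi => ?_, hsum⟩, hex⟩, Finset.mem_univ _, hs0, hmin⟩
      by_contra hiT
      exact hi (hk0 i hiT)
    · rintro ⟨⟨⟨hsupp, hsum⟩, hex⟩, -, hs0, hmin⟩
      obtain ⟨i, hi, hzero⟩ := hex
      refine ⟨⟨i, hi⟩, fun i hiT => ?_, hs0, hsum, ⟨i, hi, hzero⟩, hmin⟩
      by_contra hne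
      exact hiT (hsupp i hne)
  rw [hset, Set.ncard_coe_finset]
  have hdisj : ∀ x ∈ (Finset.univ : Finset (Finset (Fin (n + 1)))), ∀ y ∈ Finset.univ,
      x ≠ y → Disjoint (((KF n D x) ×ˢ (SF n x)).image fun p => (x, p.1, p.2))
        (((KF n D y) ×ˢ (SF n y)).image fun p => (y, p.1, p.2)) := by
    intro x _ y _ hxy
    rw [Finset.disjoint_left]
    rintro q hq hq'
    rw [Finset.mem_image] at hq hq'
    obtain ⟨p, -, rfl⟩ := hq
    obtain ⟨p', -, heq⟩ := hq'
    exact hxy (Prod.ext_iff.1 heq).1.symm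
  rw [hA, Finset.card_biUnion hdisj]
  have himg : ∀ T : Finset (Fin (n + 1)),
      (((KF n D T) ×ˢ (SF n T)).image fun p => (T, p.1, p.2)).card
        = (KF n D T).card * (SF n T).card := by
    intro T
    rw [Finset.card_image_of_injective _ (fun p q h => by simpa [Prod.ext_iff] using h),
      Finset.card_product]
  have hterm : ∀ T : Finset (Fin (n + 1)),
      (KF n D T).card * (SF n T).card
        = (((D - T.card) / 2 + T.card).choose T.card
            - ((D - T.card) / 2).choose T.card) * 2 ^ (T.card - 1) := by
    intro T
    rcases T.eq_empty_or_nonempty with rfl | hT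
    · have h0 : (KF n D (∅ : Finset (Fin (n + 1)))).card = 0 := by
        unfold KF
        simp
      rw [h0]
      simp
    · unfold KF
      rw [card_SF n T hT]
      congr 1
      convert card_Kset T ((D - T.card) / 2)
  have h1 : ∑ T : Finset (Fin (n + 1)),
      (((KF n D T) ×ˢ (SF n T)).image fun p => (T, p.1, p.2)).card
        = ∑ T : Finset (Fin (n + 1)),
          (((D - T.card) / 2 + T.card).choose T.card
            - ((D - T.card) / 2).choose T.card) * 2 ^ (T.card - 1) :=
    Finset.sum_congr rfl fun T _ => by rw [himg T, hterm T]
  rw [h1]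
  have hgroup := Finset.sum_fiberwise_of_maps_to (g := Finset.card)
    (t := Finset.range (n + 2))
    (fun (T : Finset (Fin (n + 1))) (_ : T ∈ Finset.univ) => Finset.mem_range.2 (by
      have := Finset.card_le_univ T
      rw [Fintype.card_fin] at this
      omega))
    (fun T => (((D - T.card) / 2 + T.card).choose T.card
            - ((D - T.card) / 2).choose T.card) * 2 ^ (T.card - 1))
  rw [← hgroup]
  have hcount : ∀ r : ℕ,
      (Finset.univ.filter fun T : Finset (Fin (n + 1)) => T.card = r).card
        = (n + 1).choose r := by
    intro r
    have : (Finset.univ.filter fun T : Finset (Fin (n + 1)) => T.card = r)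
        = Finset.powersetCard r Finset.univ := by
      rw [Finset.powersetCard_eq_filter, Finset.powerset_univ]
    rw [this, Finset.card_powersetCard, Finset.card_univ, Fintype.card_fin]
  have hinner : ∀ r : ℕ,
      (∑ T ∈ Finset.univ.filter fun T : Finset (Fin (n + 1)) => T.card = r,
        (((D - T.card) / 2 + T.card).choose T.card
            - ((D - T.card) / 2).choose T.card) * 2 ^ (T.card - 1))
        = (((D - r) / 2 + r).choose r - ((D - r) / 2).choose r) * 2 ^ (r - 1)
            * (n + 1).choose r := by
    intro r
    rw [Finset.sum_congr rfl (fun T hT => by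
      rw [(Finset.mem_filter.1 hT).2] :
        ∀ T ∈ Finset.univ.filter fun T : Finset (Fin (n + 1)) => T.card = r,
          (((D - T.card) / 2 + T.card).choose T.card
            - ((D - T.card) / 2).choose T.card) * 2 ^ (T.card - 1)
          = (((D - r) / 2 + r).choose r - ((D - r) / 2).choose r) * 2 ^ (r - 1))]
    rw [Finset.sum_const, hcount r, smul_eq_mul, mul_comm]
  rw [Finset.sum_congr rfl fun r _ => hinner r]
  have hrange : Finset.range (n + 2) = insert 0 (Finset.Icc 1 (n + 1)) := by
    ext x
    simp only [Finset.mem_range, Finset.mem_insert, Finset.mem_Icc]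
    omega
  rw [hrange, Finset.sum_insert (by simp)]
  simp
end

section
/- Fix an integer n ≥ 1 and define, for integers D ≥ n + 1, K(n, D) = ∑_{r=1}^{n+1} ( C(⌊(D − r)/2⌋ + r, r) − C(⌊(D − r)/2⌋, r) ) · 2^{r−1} · C(n + 1, r). Then, as D → ∞, K(n, D) = ((n+1)/n!) · D^n + O(D^{n−1}); that is, the function D ↦ K(n, D) − ((n+1)/n!) · D^n is O(D^{n−1}) as D → ∞. -/
open Filter Asymptotics Finset

private lemma tel (m s : ℕ) : ∀ t : ℕ,
    m.choose (s+1) + ∑ k ∈ range t, (m+k).choose s = (m+t).choose (s+1)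
  | 0 => by simp
  | t+1 => by
    rw [sum_range_succ, ← add_assoc, tel m s t, show m+(t+1) = (m+t)+1 from rfl,
      Nat.choose_succ_succ']
    omega

private lemma tel' (m r : ℕ) (hr : 1 ≤ r) :
    (m+r).choose r - m.choose r = ∑ k ∈ range r, (m+k).choose (r-1) := by
  obtain ⟨s, rfl⟩ : ∃ s, r = s + 1 := ⟨r - 1, by omega⟩
  have h := tel m s (s+1)
  simp only [Nat.add_sub_cancel]
  omega

private lemma powdiff {x y : ℝ} (hy : 0 ≤ y) (hxy : y ≤ x) (N : ℕ) :
    x^N - y^N ≤ N * (x - y) * x^(N-1) := by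
  rw [← geom_sum₂_mul]
  have hx : 0 ≤ x := hy.trans hxy
  have hsum : ∑ i ∈ range N, x^i * y^(N-1-i) ≤ N * x^(N-1) := by
    calc ∑ i ∈ range N, x^i * y^(N-1-i) ≤ ∑ _i ∈ range N, x^(N-1) := by
          apply Finset.sum_le_sum
          intro i hi
          have hiN := Finset.mem_range.mp hi
          calc x^i * y^(N-1-i) ≤ x^i * x^(N-1-i) := by gcongr
            _ = x^(N-1) := by rw [← pow_add]; congr 1; omega
      _ = N * x^(N-1) := by simp [Finset.sum_const]
  calc (∑ i ∈ range N, x^i * y^(N-1-i)) * (x - y) ≤ (N * x^(N-1)) * (x - y) := by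
        apply mul_le_mul_of_nonneg_right hsum (by linarith)
    _ = N * (x - y) * x^(N-1) := by ring

/-- **Asymptotics of `K(n, D)`.**  Fix `n ≥ 1` and let, for `D ≥ n + 1`,
`K(n,D) = ∑_{r=1}^{n+1} (C(⌊(D−r)/2⌋ + r, r) − C(⌊(D−r)/2⌋, r)) · 2^{r−1} · C(n+1, r)`.
Then `K(n,D) = ((n+1)/n!) · D^n + O(D^{n−1})` as `D → ∞`, i.e. the function
`D ↦ K(n,D) − ((n+1)/n!) · D^n` is `O(D^{n−1})`. -/
theorem K_n_D_asymptotics (n : ℕ) (hn : 1 ≤ n) (K : ℕ → ℕ)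
    (hK : ∀ D, n + 1 ≤ D →
      K D = ∑ r ∈ Finset.Icc 1 (n + 1),
        (((D - r) / 2 + r).choose r - ((D - r) / 2).choose r) * 2 ^ (r - 1) *
          (n + 1).choose r) :
    (fun D : ℕ => (K D : ℝ) - ((n + 1 : ℝ) / (n.factorial : ℝ)) * (D : ℝ) ^ n)
      =O[atTop] (fun D : ℕ => (D : ℝ) ^ (n - 1)) := by
  classical
  rw [isBigO_iff]
  refine ⟨((∑ r ∈ Finset.Icc 1 n, r * 2^(r-1) * (n+1).choose r : ℕ) : ℝ)
      + (n+1) * (6*n^2) * 2^(n-1) / n.factorial, ?_⟩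
  filter_upwards [eventually_ge_atTop (4*n+4)] with D hD
  simp only [Real.norm_eq_abs]
  have hD1 : n + 1 ≤ D := by omega
  set m : ℕ := (D - (n+1))/2 with hm
  have hmD1 : 2*m + n + 1 ≤ D := by omega
  have hmD2 : D ≤ 2*m + n + 2 := by omega
  -- rewrite K D in ℕ using telescoping
  have hN : K D = (∑ r ∈ Finset.Icc 1 n,
        (∑ k ∈ range r, ((D - r)/2 + k).choose (r-1)) * 2^(r-1) * (n+1).choose r)
      + (∑ k ∈ range (n+1), (m + k).choose n) * 2^n := by
    rw [hK D hD1]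
    have : ∀ r ∈ Finset.Icc 1 (n+1),
        (((D - r) / 2 + r).choose r - ((D - r) / 2).choose r) * 2 ^ (r - 1) * (n + 1).choose r
        = (∑ k ∈ range r, ((D - r)/2 + k).choose (r-1)) * 2^(r-1) * (n+1).choose r := by
      intro r hr
      obtain ⟨hr1, _⟩ := Finset.mem_Icc.mp hr
      rw [tel' _ r hr1]
    rw [Finset.sum_congr rfl this, Finset.sum_Icc_succ_top (by omega : 1 ≤ n + 1)]
    simp [hm]
  -- real positivity facts
  have hDR : (4*(n:ℝ)+4) ≤ (D:ℝ) := by exact_mod_cast hD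
  have hnR : (1:ℝ) ≤ (n:ℝ) := by exact_mod_cast hn
  have hDpos : (0:ℝ) < D := by linarith
  -- bound on the A part (r ≤ n)
  have hA : ((∑ r ∈ Finset.Icc 1 n,
        (∑ k ∈ range r, ((D - r)/2 + k).choose (r-1)) * 2^(r-1) * (n+1).choose r : ℕ) : ℝ)
      ≤ ((∑ r ∈ Finset.Icc 1 n, r * 2^(r-1) * (n+1).choose r : ℕ) : ℝ) * (D:ℝ)^(n-1) := by
    have hnat : (∑ r ∈ Finset.Icc 1 n,
        (∑ k ∈ range r, ((D - r)/2 + k).choose (r-1)) * 2^(r-1) * (n+1).choose r)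
        ≤ (∑ r ∈ Finset.Icc 1 n, r * 2^(r-1) * (n+1).choose r) * D^(n-1) := by
      rw [Finset.sum_mul]
      apply Finset.sum_le_sum
      intro r hr
      obtain ⟨hr1, hr2⟩ := Finset.mem_Icc.mp hr
      have hin : (∑ k ∈ range r, ((D - r)/2 + k).choose (r-1)) ≤ r * D^(n-1) := by
        calc (∑ k ∈ range r, ((D - r)/2 + k).choose (r-1))
            ≤ ∑ _k ∈ range r, D^(n-1) := by
              apply Finset.sum_le_sum
              intro k hk
              have hkr := Finset.mem_range.mp hk
              calc ((D - r)/2 + k).choose (r-1) ≤ ((D - r)/2 + k)^(r-1) :=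
                    Nat.choose_le_pow _ _
                _ ≤ D^(r-1) := Nat.pow_le_pow_left (by omega) _
                _ ≤ D^(n-1) := Nat.pow_le_pow_right (by omega) (by omega)
          _ = r * D^(n-1) := by simp [Finset.sum_const, mul_comm]
      calc (∑ k ∈ range r, ((D - r)/2 + k).choose (r-1)) * 2^(r-1) * (n+1).choose r
          ≤ (r * D^(n-1)) * 2^(r-1) * (n+1).choose r := by
            exact Nat.mul_le_mul_right _ (Nat.mul_le_mul_right _ hin)
        _ = r * 2^(r-1) * (n+1).choose r * D^(n-1) := by ring
    calc ((∑ r ∈ Finset.Icc 1 n,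
        (∑ k ∈ range r, ((D - r)/2 + k).choose (r-1)) * 2^(r-1) * (n+1).choose r : ℕ) : ℝ)
        ≤ (((∑ r ∈ Finset.Icc 1 n, r * 2^(r-1) * (n+1).choose r) * D^(n-1) : ℕ) : ℝ) := by
          exact_mod_cast hnat
      _ = ((∑ r ∈ Finset.Icc 1 n, r * 2^(r-1) * (n+1).choose r : ℕ) : ℝ) * (D:ℝ)^(n-1) := by
          push_cast; ring
  -- bound on the main term
  have hT : |((∑ k ∈ range (n+1), (m + k).choose n) * 2^n : ℕ) -
        ((n + 1 : ℝ) / (n.factorial : ℝ)) * (D : ℝ) ^ n|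
      ≤ (n+1) * (6*n^2) * 2^(n-1) / n.factorial * (D:ℝ)^(n-1) := by
    have hfacpos : (0:ℝ) < n.factorial := by exact_mod_cast n.factorial_pos
    have key : ∀ k ∈ range (n+1),
        |((m+k).choose n : ℝ) * 2^n - (D:ℝ)^n / n.factorial|
        ≤ (6*n^2) * 2^(n-1) * (D:ℝ)^(n-1) / n.factorial := by
      intro k hk
      have hkn : k ≤ n := by have := Finset.mem_range.mp hk; omega
      have hkR : (k:ℝ) ≤ n := by exact_mod_cast hkn
      have hkR0 : (0:ℝ) ≤ k := Nat.cast_nonneg k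
      -- product formula
      have hprod : (n.factorial : ℝ) * ((m+k).choose n : ℝ) * 2^n
          = ∏ i ∈ range n, (2*((m:ℝ)+k-i)) := by
        have h1 : (m+k).descFactorial n = ∏ i ∈ range n, (m+k-i) :=
          Nat.descFactorial_eq_prod_range _ n
        have h2 : (m+k).descFactorial n = n.factorial * (m+k).choose n :=
          Nat.descFactorial_eq_factorial_mul_choose _ _
        have h3 : (n.factorial : ℝ) * ((m+k).choose n : ℝ)
            = ∏ i ∈ range n, ((m:ℝ)+k-i) := by
          rw [show (n.factorial : ℝ) * ((m+k).choose n : ℝ)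
              = ((n.factorial * (m+k).choose n : ℕ) : ℝ) by push_cast; ring, ← h2, h1]
          rw [Nat.cast_prod]
          apply Finset.prod_congr rfl
          intro i hi
          have hi' : i ≤ m + k := by
            have := Finset.mem_range.mp hi; omega
          push_cast [Nat.cast_sub hi']
          ring
        rw [Finset.prod_mul_distrib, Finset.prod_const, ← h3, Finset.card_range]
        ring
      -- factor bounds
      have hfac : ∀ i ∈ range n,
          (D:ℝ) - 3*n ≤ 2*((m:ℝ)+k-i) ∧ 2*((m:ℝ)+k-i) ≤ (D:ℝ) + 3*n := by
        intro i hi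
        have hiN := Finset.mem_range.mp hi
        have hiR : (i:ℝ) + 1 ≤ n := by exact_mod_cast hiN
        have hiR0 : (0:ℝ) ≤ i := Nat.cast_nonneg i
        have h1 : (2*(m:ℝ) + n + 1) ≤ D := by exact_mod_cast hmD1
        have h2 : (D:ℝ) ≤ 2*m + n + 2 := by exact_mod_cast hmD2
        constructor <;> nlinarith [hnR]
      have hylb : (0:ℝ) ≤ (D:ℝ) - 3*n := by linarith
      have hxub : (D:ℝ) + 3*n ≤ 2*D := by linarith
      have hplb : ((D:ℝ) - 3*n)^n ≤ ∏ i ∈ range n, (2*((m:ℝ)+k-i)) := by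
        calc ((D:ℝ) - 3*n)^n = ∏ _i ∈ range n, ((D:ℝ) - 3*n) := by
              rw [Finset.prod_const, Finset.card_range]
          _ ≤ ∏ i ∈ range n, (2*((m:ℝ)+k-i)) := by
              apply Finset.prod_le_prod (fun i _ => hylb) (fun i hi => (hfac i hi).1)
      have hpub : ∏ i ∈ range n, (2*((m:ℝ)+k-i)) ≤ ((D:ℝ) + 3*n)^n := by
        calc ∏ i ∈ range n, (2*((m:ℝ)+k-i)) ≤ ∏ _i ∈ range n, ((D:ℝ) + 3*n) := by
              apply Finset.prod_le_prod
              · intro i hi; linarith [(hfac i hi).1]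
              · intro i hi; exact (hfac i hi).2
          _ = ((D:ℝ) + 3*n)^n := by rw [Finset.prod_const, Finset.card_range]
      have hDylb : ((D:ℝ) - 3*n)^n ≤ (D:ℝ)^n := by
        apply pow_le_pow_left₀ hylb; linarith
      have hDxub : (D:ℝ)^n ≤ ((D:ℝ) + 3*n)^n := by
        apply pow_le_pow_left₀ (le_of_lt hDpos); linarith
      have hdiff : ((D:ℝ) + 3*n)^n - ((D:ℝ) - 3*n)^n ≤ (6*n^2) * 2^(n-1) * (D:ℝ)^(n-1) := by
        calc ((D:ℝ) + 3*n)^n - ((D:ℝ) - 3*n)^n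
            ≤ n * (((D:ℝ)+3*n) - ((D:ℝ)-3*n)) * ((D:ℝ)+3*n)^(n-1) :=
              powdiff hylb (by linarith) n
          _ = n * (6*n) * ((D:ℝ)+3*n)^(n-1) := by ring
          _ ≤ n * (6*n) * (2*(D:ℝ))^(n-1) := by
              gcongr <;> linarith
          _ = (6*n^2) * 2^(n-1) * (D:ℝ)^(n-1) := by rw [mul_pow]; ring
      have habs : |(∏ i ∈ range n, (2*((m:ℝ)+k-i))) - (D:ℝ)^n|
          ≤ (6*n^2) * 2^(n-1) * (D:ℝ)^(n-1) := by
        rw [abs_le]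
        constructor <;> linarith
      have heq : ((m+k).choose n : ℝ) * 2^n - (D:ℝ)^n / n.factorial
          = ((∏ i ∈ range n, (2*((m:ℝ)+k-i))) - (D:ℝ)^n) / n.factorial := by
        rw [← hprod]; field_simp
      rw [heq, abs_div, abs_of_pos hfacpos]
      gcongr
    -- sum the per-k bounds
    have hcast : (((∑ k ∈ range (n+1), (m + k).choose n) * 2^n : ℕ) : ℝ)
        = ∑ k ∈ range (n+1), ((m+k).choose n : ℝ) * 2^n := by
      push_cast; rw [Finset.sum_mul]
    have hsplit : ((n + 1 : ℝ) / (n.factorial : ℝ)) * (D : ℝ) ^ n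
        = ∑ _k ∈ range (n+1), (D:ℝ)^n / n.factorial := by
      rw [Finset.sum_const, Finset.card_range]
      push_cast
      ring
    rw [hcast, hsplit, ← Finset.sum_sub_distrib]
    calc |∑ k ∈ range (n+1), (((m+k).choose n : ℝ) * 2^n - (D:ℝ)^n / n.factorial)|
        ≤ ∑ k ∈ range (n+1), |((m+k).choose n : ℝ) * 2^n - (D:ℝ)^n / n.factorial| :=
          Finset.abs_sum_le_sum_abs _ _
      _ ≤ ∑ _k ∈ range (n+1), (6*n^2) * 2^(n-1) * (D:ℝ)^(n-1) / n.factorial :=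
          Finset.sum_le_sum key
      _ = (n+1) * (6*n^2) * 2^(n-1) / n.factorial * (D:ℝ)^(n-1) := by
          rw [Finset.sum_const, Finset.card_range]
          push_cast
          ring
  -- combine
  have hKR : (K D : ℝ) = ((∑ r ∈ Finset.Icc 1 n,
        (∑ k ∈ range r, ((D - r)/2 + k).choose (r-1)) * 2^(r-1) * (n+1).choose r : ℕ) : ℝ)
      + (((∑ k ∈ range (n+1), (m + k).choose n) * 2^n : ℕ) : ℝ) := by
    rw [hN]; push_cast; ring
  rw [hKR, abs_of_nonneg (by positivity : (0:ℝ) ≤ (D:ℝ)^(n-1)), add_sub_assoc]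
  have htri := abs_add_le
    ((((∑ r ∈ Finset.Icc 1 n,
        (∑ k ∈ range r, ((D - r)/2 + k).choose (r-1)) * 2^(r-1) * (n+1).choose r : ℕ) : ℝ)))
    ((((∑ k ∈ range (n+1), (m + k).choose n) * 2^n : ℕ) : ℝ)
      - ((n + 1 : ℝ) / (n.factorial : ℝ)) * (D : ℝ) ^ n)
  have hAabs : |((∑ r ∈ Finset.Icc 1 n,
        (∑ k ∈ range r, ((D - r)/2 + k).choose (r-1)) * 2^(r-1) * (n+1).choose r : ℕ) : ℝ)|
      = ((∑ r ∈ Finset.Icc 1 n,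
        (∑ k ∈ range r, ((D - r)/2 + k).choose (r-1)) * 2^(r-1) * (n+1).choose r : ℕ) : ℝ) :=
    abs_of_nonneg (Nat.cast_nonneg _)
  rw [hAabs] at htri
  linarith [hA, hT, htri]
end

section
/- Fix an integer n ≥ 1 and define, for each positive integer D, F(n, D) = ∑_{d=1}^{D} μ(d) · ( C(n + 1 + ⌊D/d⌋, n + 1) − 1 ), where μ is the Möbius function. Then F(n, D) / D^{n+1} converges to 1 / ((n+1)! · ζ(n+1)) as D → ∞, where ζ is the Riemann zeta function. -/
open Filter Topology ArithmeticFunction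


lemma lemB (d : ℕ) (hd : 1 ≤ d) (c : ℝ) :
    Tendsto (fun D : ℕ => (((D / d : ℕ) : ℝ) + c) / D) atTop (𝓝 (1 / d)) := by
  have hd0 : (0:ℝ) < d := by exact_mod_cast hd
  have hmod : Tendsto (fun D : ℕ => ((D % d : ℕ) : ℝ) / D) atTop (𝓝 0) := by
    apply tendsto_of_tendsto_of_tendsto_of_le_of_le' tendsto_const_nhds
      (tendsto_const_div_atTop_nhds_zero_nat (d : ℝ))
    · filter_upwards with D; positivity
    · filter_upwards with D
      gcongr
      exact_mod_cast (Nat.mod_lt D hd).le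
  have key : Tendsto (fun D : ℕ => (1/(d:ℝ)) * (1 - ((D % d : ℕ) : ℝ) / D + c * d / D))
      atTop (𝓝 ((1/(d:ℝ)) * (1 - 0 + 0))) := by
    refine Tendsto.const_mul _ (((tendsto_const_nhds.sub hmod).add
      (tendsto_const_div_atTop_nhds_zero_nat (c * d))))
  simp only [sub_zero, add_zero, mul_one] at key
  apply key.congr'
  filter_upwards [eventually_ge_atTop 1] with D hD
  have hD0 : (0:ℝ) < D := by exact_mod_cast hD
  have hm : ((D / d : ℕ) : ℝ) * d + ((D % d : ℕ) : ℝ) = D := by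
    exact_mod_cast Nat.div_add_mod' D d
  field_simp
  ring_nf
  nlinarith [hm]

lemma choose_cast (n m : ℕ) : (((n + 1 + m).choose (n + 1)) : ℝ) =
    (∏ i ∈ Finset.range (n + 1), ((m : ℝ) + ((n : ℝ) + 1 - i))) / (n + 1).factorial := by
  have h := Nat.descFactorial_eq_factorial_mul_choose (n + 1 + m) (n + 1)
  rw [Nat.descFactorial_eq_prod_range] at h
  have h2 : (∏ i ∈ Finset.range (n + 1), ((m : ℝ) + ((n : ℝ) + 1 - i)))
      = ((n + 1).factorial : ℝ) * ((n + 1 + m).choose (n + 1) : ℝ) := by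
    rw [← Nat.cast_mul, ← h, Nat.cast_prod]
    refine Finset.prod_congr rfl fun i hi => ?_
    have hi' : i ≤ n := Nat.lt_succ_iff.mp (Finset.mem_range.mp hi)
    have : i ≤ n + 1 + m := by omega
    rw [Nat.cast_sub this]
    push_cast
    ring
  rw [h2]
  field_simp


lemma lemA (n d : ℕ) (hd : 1 ≤ d) :
    Tendsto (fun D : ℕ => (((n + 1 + D / d).choose (n + 1) : ℝ) - 1) / (D : ℝ) ^ (n + 1))
      atTop (𝓝 (1 / ((d : ℝ) ^ (n + 1) * (n + 1).factorial))) := by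
  have hinv : Tendsto (fun D : ℕ => 1 / (D : ℝ) ^ (n + 1)) atTop (𝓝 0) := by
    simp only [one_div]
    exact ((tendsto_pow_atTop (Nat.succ_ne_zero n)).comp
      (tendsto_natCast_atTop_atTop (R := ℝ))).inv_tendsto_atTop
  have hprod : Tendsto (fun D : ℕ => ∏ i ∈ Finset.range (n + 1),
      ((((D / d : ℕ) : ℝ) + ((n : ℝ) + 1 - i)) / D)) atTop
      (𝓝 (∏ i ∈ Finset.range (n + 1), (1 / (d : ℝ)))) :=
    tendsto_finset_prod _ (fun i _ => lemB d hd _)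
  have key : Tendsto (fun D : ℕ =>
      (∏ i ∈ Finset.range (n + 1), ((((D / d : ℕ) : ℝ) + ((n : ℝ) + 1 - i)) / D))
        * (1 / ((n + 1).factorial : ℝ)) - 1 / (D : ℝ) ^ (n + 1)) atTop
      (𝓝 ((∏ i ∈ Finset.range (n + 1), (1 / (d : ℝ))) * (1 / ((n + 1).factorial : ℝ)) - 0)) :=
    (hprod.mul_const _).sub hinv
  rw [Finset.prod_const, Finset.card_range, sub_zero, div_pow, one_pow,
    div_mul_div_comm, one_mul] at key
  apply key.congr'
  filter_upwards [eventually_ge_atTop 1] with D hD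
  have hD0 : (0:ℝ) < D := by exact_mod_cast hD
  rw [choose_cast, Finset.prod_div_distrib, Finset.prod_const, Finset.card_range]
  field_simp

lemma lemC (n : ℕ) {d D : ℕ} (hd : 1 ≤ d) (hdD : d ≤ D) :
    |(moebius d : ℝ) * (((n + 1 + D / d).choose (n + 1) : ℝ) - 1) / (D : ℝ) ^ (n + 1)|
      ≤ ((n : ℝ) + 2) ^ (n + 1) / (((n + 1).factorial : ℝ) * (d : ℝ) ^ (n + 1)) := by
  have hD : 1 ≤ D := hd.trans hdD
  have hd0 : (0:ℝ) < d := by exact_mod_cast hd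
  have hD0 : (0:ℝ) < D := by exact_mod_cast hD
  set m := D / d with hm
  have hm1 : 1 ≤ m := (Nat.one_le_div_iff hd).mpr hdD
  set C : ℝ := ((n + 1 + m).choose (n + 1) : ℝ) with hC
  have hc1 : (1:ℝ) ≤ C := by
    have h : 0 < (n + 1 + m).choose (n + 1) := Nat.choose_pos (by omega)
    rw [hC]; exact_mod_cast h
  have habs : |(moebius d : ℝ) * (C - 1)| ≤ C := by
    rw [abs_mul]
    have h1 : |(moebius d : ℝ)| ≤ 1 := by
      have := abs_moebius_le_one (n := d)
      exact_mod_cast this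
    have h2 : |C - 1| = C - 1 := abs_of_nonneg (by linarith)
    rw [h2]
    have := mul_le_of_le_one_left (by linarith : (0:ℝ) ≤ C - 1) h1
    linarith
  have hfac : ((n + 1).factorial : ℝ) * C ≤ (((n : ℝ) + 2) * m) ^ (n + 1) := by
    have h1 : (n + 1).factorial * ((n + 1 + m).choose (n + 1)) ≤ ((n + 2) * m) ^ (n + 1) := by
      have h2 : (n + 1).factorial * ((n + 1 + m).choose (n + 1))
          = (n + 1 + m).descFactorial (n + 1) :=
        (Nat.descFactorial_eq_factorial_mul_choose _ _).symm
      rw [h2]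
      refine (Nat.descFactorial_le_pow _ _).trans (Nat.pow_le_pow_left ?_ _)
      nlinarith
    rw [hC]
    exact_mod_cast h1
  have hmD : (m : ℝ) ≤ (D : ℝ) / d := Nat.cast_div_le
  have h4 : (((n : ℝ) + 2) * m) ^ (n + 1) ≤ (((n : ℝ) + 2) * ((D:ℝ)/d)) ^ (n + 1) := by
    gcongr
  have h5 : (((n : ℝ) + 2) * ((D:ℝ)/d)) ^ (n + 1)
      = ((n : ℝ) + 2) ^ (n + 1) * (D : ℝ) ^ (n + 1) / (d : ℝ) ^ (n + 1) := by
    rw [mul_pow, div_pow]; ring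
  rw [abs_div, abs_of_pos (by positivity : (0:ℝ) < (D:ℝ) ^ (n+1))]
  rw [div_le_div_iff₀ (by positivity) (by positivity)]
  have hfacpos : (0:ℝ) < ((n + 1).factorial : ℝ) := by
    exact_mod_cast (n+1).factorial_pos
  calc |(moebius d : ℝ) * (C - 1)| * (((n + 1).factorial : ℝ) * (d : ℝ) ^ (n + 1))
      ≤ C * (((n + 1).factorial : ℝ) * (d : ℝ) ^ (n + 1)) := by
        gcongr
    _ = (((n + 1).factorial : ℝ) * C) * (d : ℝ) ^ (n + 1) := by ring
    _ ≤ (((n : ℝ) + 2) * m) ^ (n + 1) * (d : ℝ) ^ (n + 1) := by gcongr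
    _ ≤ (((n : ℝ) + 2) ^ (n + 1) * (D : ℝ) ^ (n + 1) / (d : ℝ) ^ (n + 1)) * (d : ℝ) ^ (n + 1) := by
        rw [← h5]; gcongr
    _ = ((n : ℝ) + 2) ^ (n + 1) * (D : ℝ) ^ (n + 1) := by field_simp

lemma lemS (n : ℕ) (hn : 1 ≤ n) :
    Summable (fun k : ℕ => ((n : ℝ) + 2) ^ (n + 1)
      / (((n + 1).factorial : ℝ) * ((k : ℝ) + 1) ^ (n + 1))) := by
  have h1 : Summable (fun k : ℕ => 1 / ((k : ℝ)) ^ (n + 1)) :=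
    Real.summable_one_div_nat_pow.mpr (by omega)
  have h2 : Summable (fun k : ℕ => 1 / ((k : ℝ) + 1) ^ (n + 1)) := by
    have := (summable_nat_add_iff 1).mpr h1
    refine this.congr fun k => ?_
    push_cast
    ring
  refine (h2.mul_left (((n : ℝ) + 2) ^ (n + 1) / ((n + 1).factorial : ℝ))).congr fun k => ?_
  field_simp

open Complex in
lemma lemD (n : ℕ) (hn : 1 ≤ n) :
    (∑' k : ℕ, ((moebius (k + 1) : ℝ) / ((k : ℝ) + 1) ^ (n + 1))) *
      (∑' k : ℕ, (1 : ℝ) / ((k : ℝ) + 1) ^ (n + 1)) = 1 := by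
  set s : ℂ := ((n + 1 : ℕ) : ℂ) with hs_def
  have hs : 1 < s.re := by
    rw [hs_def, natCast_re]
    exact_mod_cast Nat.lt_succ_of_le hn
  have hμ : LSeriesSummable (fun k => ((moebius k : ℤ) : ℂ)) s :=
    LSeriesSummable_moebius_iff.mpr hs
  have hζ : LSeriesSummable (fun k => ((zeta k : ℕ) : ℂ)) s :=
    LSeriesSummable_zeta_iff.mpr hs
  have hM : ((∑' k : ℕ, ((moebius (k + 1) : ℝ) / ((k : ℝ) + 1) ^ (n + 1)) : ℝ) : ℂ)
      = LSeries (fun k => ((moebius k : ℤ) : ℂ)) s := by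
    rw [LSeries, Summable.tsum_eq_zero_add hμ, LSeries.term_zero, zero_add, Complex.ofReal_tsum]
    refine tsum_congr fun k => ?_
    rw [LSeries.term_of_ne_zero (Nat.succ_ne_zero k), hs_def, cpow_natCast]
    push_cast
    ring
  have hZ : ((∑' k : ℕ, (1 : ℝ) / ((k : ℝ) + 1) ^ (n + 1) : ℝ) : ℂ)
      = LSeries (fun k => ((zeta k : ℕ) : ℂ)) s := by
    rw [LSeries, Summable.tsum_eq_zero_add hζ, LSeries.term_zero, zero_add, Complex.ofReal_tsum]
    refine tsum_congr fun k => ?_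
    rw [LSeries.term_of_ne_zero (Nat.succ_ne_zero k), hs_def, cpow_natCast,
      zeta_apply_ne (Nat.succ_ne_zero k)]
    push_cast
    ring
  have key := LSeries_zeta_mul_Lseries_moebius hs
  rw [← hZ, ← hM] at key
  rw [mul_comm] at key
  exact_mod_cast key

/-- **Asymptotics of `F(n, D)`.**  Fix `n ≥ 1` and let, for positive integers `D`,
`F(n,D) = ∑_{d=1}^{D} μ(d) · (C(n + 1 + ⌊D/d⌋, n + 1) − 1)` where `μ` is the Möbius
function.  Then `F(n,D)/D^{n+1} → 1/((n+1)! · ζ(n+1))` as `D → ∞`, where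
`ζ(n+1) = ∑_{d ≥ 1} 1/d^{n+1}` is the value of the Riemann zeta function at `n+1`. -/
theorem F_n_D_asymptotics (n : ℕ) (hn : 1 ≤ n) (F : ℕ → ℤ)
    (hF : ∀ D, F D = ∑ d ∈ Finset.Icc 1 D,
      (ArithmeticFunction.moebius d) * (((n + 1 + D / d).choose (n + 1) : ℤ) - 1)) :
    Tendsto (fun D : ℕ => (F D : ℝ) / (D : ℝ) ^ (n + 1)) atTop
      (nhds (1 / (((n + 1).factorial : ℝ) *
        ∑' d : ℕ, (1 : ℝ) / ((d : ℝ) + 1) ^ (n + 1)))) := by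
  set Z : ℝ := ∑' d : ℕ, (1 : ℝ) / ((d : ℝ) + 1) ^ (n + 1) with hZdef
  set M : ℝ := ∑' k : ℕ, ((moebius (k + 1) : ℝ) / ((k : ℝ) + 1) ^ (n + 1)) with hMdef
  have hMZ : M * Z = 1 := lemD n hn
  have hfac : (0:ℝ) < ((n + 1).factorial : ℝ) := by exact_mod_cast (n + 1).factorial_pos
  have hZ0 : Z ≠ 0 := by
    intro h
    rw [h, mul_zero] at hMZ
    norm_num at hMZ
  -- the summand functions
  set f : ℕ → ℕ → ℝ := fun D k => if k + 1 ≤ D then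
    (moebius (k + 1) : ℝ) * (((n + 1 + D / (k + 1)).choose (n + 1) : ℝ) - 1) / (D : ℝ) ^ (n + 1)
    else 0 with hfdef
  set g : ℕ → ℝ := fun k =>
    (moebius (k + 1) : ℝ) * (1 / (((k : ℝ) + 1) ^ (n + 1) * (n + 1).factorial)) with hgdef
  have hab : ∀ k, Tendsto (f · k) atTop (𝓝 (g k)) := by
    intro k
    have h1 := (lemA n (k + 1) (Nat.le_add_left 1 k)).const_mul ((moebius (k + 1) : ℤ) : ℝ)
    have h2 : ((moebius (k + 1) : ℝ)) * (1 / (((k + 1 : ℕ) : ℝ) ^ (n + 1) * (n + 1).factorial))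
        = g k := by push_cast; ring
    rw [h2] at h1
    apply h1.congr'
    filter_upwards [eventually_ge_atTop (k + 1)] with D hD
    simp only [hfdef]
    simp only [if_pos hD]
    ring
  have hbound : ∀ᶠ D in atTop, ∀ k, ‖f D k‖ ≤ ((n : ℝ) + 2) ^ (n + 1)
      / (((n + 1).factorial : ℝ) * ((k : ℝ) + 1) ^ (n + 1)) := by
    filter_upwards with D k
    simp only [hfdef]
    by_cases h : k + 1 ≤ D
    · simp only [if_pos h]
      have := lemC n (d := k + 1) (D := D) (Nat.le_add_left 1 k) h
      rw [Real.norm_eq_abs]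
      convert this using 3 <;> push_cast <;> ring
    · simp only [if_neg h, norm_zero]
      positivity
  have hT := tendsto_tsum_of_dominated_convergence (lemS n hn) hab hbound
  have hsum_g : (∑' k, g k) = M * (1 / ((n + 1).factorial : ℝ)) := by
    rw [hMdef, ← tsum_mul_right]
    refine tsum_congr fun k => ?_
    rw [hgdef]
    field_simp
  rw [hsum_g] at hT
  have hval : M * (1 / ((n + 1).factorial : ℝ)) = 1 / (((n + 1).factorial : ℝ) * Z) := by
    field_simp
    linear_combination hMZ
  rw [hval] at hT
  apply hT.congr'
  filter_upwards [eventually_ge_atTop 1] with D hD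
  have hts : (∑' k, f D k) = ∑ k ∈ Finset.range D, f D k := by
    apply tsum_eq_sum
    intro k hk
    simp only [hfdef]
    simp only [Finset.mem_range, not_lt] at hk
    rw [if_neg (by omega)]
  rw [hts, hF D]
  push_cast
  rw [Finset.sum_div, ← Finset.Ico_add_one_right_eq_Icc, Finset.sum_Ico_eq_sum_range]
  norm_num
  refine Finset.sum_congr rfl fun k hk => ?_
  simp only [hfdef]
  have hkD : k + 1 ≤ D := Finset.mem_range.mp hk
  rw [if_pos hkD]
  simp only [Nat.add_comm 1 k]
end

section
/- Let R be a commutative ring and let a = (a_0, …, a_n) be a sequence of n+1 nonnegative integers with D = ∑_{i=0}^n a_i. Then in R[X_0, …, X_n] one has D! · X_0^{a_0} X_1^{a_1} ⋯ X_n^{a_n} = ∑_{p} (−1)^{D − (p_0 + ⋯ + p_n)} · C(a_0, p_0) ⋯ C(a_n, p_n) · (p_0 X_0 + p_1 X_1 + ⋯ + p_n X_n)^D, where the sum ranges over all tuples p = (p_0, …, p_n) of integers with 0 ≤ p_i ≤ a_i for each i. -/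
open Finset fwdDiff

lemma fwdDiff_pow (d : ℕ) :
    fwdDiff (1:ℕ) (fun x : ℕ => (x : ℤ) ^ d) =
      fun x : ℕ => ∑ e ∈ range d, (d.choose e : ℤ) * (x : ℤ) ^ e := by
  funext x
  simp only [fwdDiff, Nat.cast_add, Nat.cast_one]
  rw [add_pow, Finset.sum_range_succ]
  simp [mul_comm]

lemma fwdDiff_iter_pow_lt : ∀ d m : ℕ, d < m →
    (fwdDiff (1:ℕ))^[m] (fun x : ℕ => (x : ℤ) ^ d) 0 = 0 := by
  intro d
  induction d using Nat.strong_induction_on with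
  | _ d IH =>
    intro m hm
    obtain ⟨m', rfl⟩ : ∃ m', m = m' + 1 := ⟨m - 1, by omega⟩
    rw [Function.iterate_succ_apply, fwdDiff_pow]
    have : (fun x : ℕ => ∑ e ∈ range d, (d.choose e : ℤ) * (x : ℤ) ^ e)
        = ∑ e ∈ range d, (d.choose e : ℤ) • (fun x : ℕ => (x : ℤ) ^ e) := by
      funext x; simp [Finset.sum_apply]
    rw [this, fwdDiff_iter_finset_sum, Finset.sum_apply]
    refine Finset.sum_eq_zero fun e he => ?_
    rw [Finset.mem_range] at he
    rw [fwdDiff_iter_const_smul, Pi.smul_apply, IH e he m' (by omega), smul_zero]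

lemma fwdDiff_iter_pow_self : ∀ d : ℕ,
    (fwdDiff (1:ℕ))^[d] (fun x : ℕ => (x : ℤ) ^ d) 0 = d.factorial := by
  intro d
  induction d with
  | zero => simp
  | succ d IH =>
    rw [Function.iterate_succ_apply, fwdDiff_pow]
    have : (fun x : ℕ => ∑ e ∈ range (d+1), ((d+1).choose e : ℤ) * (x : ℤ) ^ e)
        = ∑ e ∈ range (d+1), ((d+1).choose e : ℤ) • (fun x : ℕ => (x : ℤ) ^ e) := by
      funext x; simp [Finset.sum_apply]
    rw [this, fwdDiff_iter_finset_sum, Finset.sum_apply, Finset.sum_range_succ]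
    rw [Finset.sum_eq_zero (fun e he => by
      rw [Finset.mem_range] at he
      rw [fwdDiff_iter_const_smul, Pi.smul_apply, fwdDiff_iter_pow_lt e d he, smul_zero])]
    rw [fwdDiff_iter_const_smul, Pi.smul_apply, IH, zero_add]
    push_cast [Nat.choose_succ_self_right, Nat.factorial_succ]
    rw [zsmul_eq_mul]; push_cast; ring

/-- The alternating sum `∑ (-1)^(m-j) C(m,j) j^d`. -/
lemma alt_sum_choose_pow (m d : ℕ) :
    ∑ j ∈ range (m + 1), (-1 : ℤ) ^ (m - j) * (m.choose j) * (j : ℤ) ^ d =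
      (fwdDiff (1:ℕ))^[m] (fun x : ℕ => (x : ℤ) ^ d) 0 := by
  rw [fwdDiff_iter_eq_sum_shift]
  refine Finset.sum_congr rfl fun j hj => ?_
  simp [zsmul_eq_mul, mul_assoc]

open Finset MvPolynomial

/-- auxiliary alternating sum for the Waring identity. -/
def waringT (m d : ℕ) : ℤ := ∑ j ∈ range (m + 1), (-1 : ℤ) ^ (m - j) * (m.choose j) * (j : ℤ) ^ d

lemma waringT_lt {m d : ℕ} (h : d < m) : waringT m d = 0 := by
  unfold waringT
  rw [alt_sum_choose_pow, fwdDiff_iter_pow_lt _ _ h]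

lemma waringT_self (m : ℕ) : waringT m m = m.factorial := by
  unfold waringT
  rw [alt_sum_choose_pow, fwdDiff_iter_pow_self]

lemma waringT_prod {n : ℕ} (a k : Fin (n + 1) → ℕ) :
    ∑ p ∈ Fintype.piFinset (fun i => Finset.range (a i + 1)),
      ∏ i, ((-1 : ℤ) ^ (a i - p i) * ((a i).choose (p i) : ℤ) * (p i : ℤ) ^ k i)
      = ∏ i, waringT (a i) (k i) := by
  unfold waringT
  exact (Finset.prod_univ_sum (fun i => Finset.range (a i + 1))
    (fun i j => (-1 : ℤ) ^ (a i - j) * ((a i).choose j : ℤ) * (j : ℤ) ^ k i)).symm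

/-- **The classical Waring-type identity for monomials.**  Let `R` be a commutative ring
and `a = (a_0,…,a_n)` nonnegative integers with `D = ∑ a_i`.  Then in `R[X_0,…,X_n]`:
`D! · X_0^{a_0} ⋯ X_n^{a_n}
  = ∑_{0 ≤ p_i ≤ a_i} (−1)^{D − (p_0 + ⋯ + p_n)} C(a_0,p_0) ⋯ C(a_n,p_n)
      (p_0 X_0 + ⋯ + p_n X_n)^D`. -/
theorem naive_waring_identity {R : Type*} [CommRing R] (n : ℕ) (a : Fin (n + 1) → ℕ)
    (D : ℕ) (hD : D = ∑ i, a i) :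
    (D.factorial : MvPolynomial (Fin (n + 1)) R) * ∏ i, X i ^ a i =
      ∑ p ∈ Fintype.piFinset (fun i => Finset.range (a i + 1)),
        (-1 : MvPolynomial (Fin (n + 1)) R) ^ (D - ∑ i, p i) *
          (∏ i, ((a i).choose (p i) : MvPolynomial (Fin (n + 1)) R)) *
          (∑ i, (p i : MvPolynomial (Fin (n + 1)) R) * X i) ^ D := by
  classical
  symm
  calc
    ∑ p ∈ Fintype.piFinset (fun i => Finset.range (a i + 1)),
        (-1 : MvPolynomial (Fin (n + 1)) R) ^ (D - ∑ i, p i) *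
          (∏ i, ((a i).choose (p i) : MvPolynomial (Fin (n + 1)) R)) *
          (∑ i, (p i : MvPolynomial (Fin (n + 1)) R) * X i) ^ D
      = ∑ p ∈ Fintype.piFinset (fun i => Finset.range (a i + 1)),
          ∑ k ∈ piAntidiag univ D,
            (((-1 : ℤ) ^ (D - ∑ i, p i) * (Nat.multinomial univ k : ℤ) *
              ∏ i, (((a i).choose (p i) : ℤ) * (p i : ℤ) ^ k i) : ℤ) : MvPolynomial (Fin (n + 1)) R) *
              ∏ i, X i ^ k i := by
        refine Finset.sum_congr rfl fun p hp => ?_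
        rw [Finset.sum_pow_eq_sum_piAntidiag, Finset.mul_sum]
        refine Finset.sum_congr rfl fun k hk => ?_
        push_cast
        rw [Finset.prod_mul_distrib]
        simp_rw [mul_pow]
        rw [Finset.prod_mul_distrib]
        ring
    _ = ∑ k ∈ piAntidiag univ D,
          (((Nat.multinomial univ k : ℤ) * ∏ i, waringT (a i) (k i) : ℤ) : MvPolynomial (Fin (n + 1)) R) *
            ∏ i, X i ^ k i := by
        rw [Finset.sum_comm]
        refine Finset.sum_congr rfl fun k hk => ?_
        rw [← Finset.sum_mul, ← Int.cast_sum]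
        congr 2
        have key : ∀ p ∈ Fintype.piFinset (fun i => Finset.range (a i + 1)),
            (-1 : ℤ) ^ (D - ∑ i, p i) * (Nat.multinomial univ k : ℤ) *
              ∏ i, (((a i).choose (p i) : ℤ) * (p i : ℤ) ^ k i)
            = (Nat.multinomial univ k : ℤ) *
              ∏ i, ((-1 : ℤ) ^ (a i - p i) * ((a i).choose (p i) : ℤ) * (p i : ℤ) ^ k i) := by
          intro p hp
          have hple : ∀ i, p i ≤ a i := by
            intro i
            have := Fintype.mem_piFinset.mp hp i
            rw [Finset.mem_range] at this
            omega
          have hsub : D - ∑ i, p i = ∑ i, (a i - p i) := by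
            rw [hD, eq_comm, Finset.sum_tsub_distrib _ (fun i _ => hple i)]
          rw [hsub, ← Finset.prod_pow_eq_pow_sum]
          rw [Finset.prod_mul_distrib, Finset.prod_mul_distrib, Finset.prod_mul_distrib]
          ring
        rw [Finset.sum_congr rfl key, ← Finset.mul_sum, waringT_prod]
    _ = (((Nat.multinomial univ a : ℤ) * ∏ i, waringT (a i) (a i) : ℤ) : MvPolynomial (Fin (n + 1)) R) *
          ∏ i, X i ^ a i := by
        refine Finset.sum_eq_single_of_mem a ?_ ?_
        · simp [Finset.mem_piAntidiag, hD]
        · intro k hk hne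
          have hsum : ∑ i, k i = D := (Finset.mem_piAntidiag.mp hk).1
          have hex : ∃ i, k i < a i := by
            by_contra h
            push_neg at h
            refine hne (funext fun i => ?_)
            exact ((Finset.sum_eq_sum_iff_of_le (fun i _ => h i)).mp
                (by rw [hsum, hD]) i (Finset.mem_univ i)).symm
          obtain ⟨i, hi⟩ := hex
          rw [Finset.prod_eq_zero (Finset.mem_univ i) (waringT_lt hi), mul_zero,
            Int.cast_zero, zero_mul]
    _ = (D.factorial : MvPolynomial (Fin (n + 1)) R) * ∏ i, X i ^ a i := by
        congr 1
        have hca : ∀ i : Fin (n + 1), waringT (a i) (a i) = ((a i).factorial : ℤ) :=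
          fun i => waringT_self (a i)
        have hms : (∏ i, (a i).factorial) * Nat.multinomial univ a = D.factorial := by
          rw [hD]; exact Nat.multinomial_spec _ _
        rw [Finset.prod_congr rfl (fun i _ => hca i), ← hms]
        push_cast
        ring
end
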